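/- arXiv:0905.3052 — 2 statements merged into one kernel-verified Lean document; each statement's English description precedes it below -/
import Mathlib

section
/- Let F be a fractal subset of [0,1] satisfying the lacunarity condition with constant λ ∈ (0,1], and let μ be a non-atomic Borel probability measure with topological support exactly F satisfying the density condition: there exist 0 < c₁ ≤ c₂ < ∞ and ρ > 0 such that r^{c₂} ≤ μ([x−r, x+r]) ≤ r^{c₁} for all x ∈ F and 0 < r ≤ ρ. Then for every a ≥ 2/λ there exist constants 0 < c₃ ≤ c₄ < ∞ and N₀ such that n^{−c₄} ≤ μ(Ī_n^a) ≤ n^{−c₃} for all n ≥ N₀. -/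
open MeasureTheory Filter Set
open scoped Classical

noncomputable section

/-- The enlargement `B̄^a` of the interval `[s,t]` by the factor `1+a` about its centre. -/
def enlarge (a s t : ℝ) : Set ℝ :=
  Set.Icc (s - a * (t - s) / 2) (t + a * (t - s) / 2)

/-- The moment sum `Σ_{B ∈ B_r^*} μ(B̄^a)^q` over grid intervals of length `r`
whose interior meets the support of `μ` (i.e. with `μ(B) > 0`). -/
def gridSum (μ : Measure ℝ) (a q R : ℝ) : ℝ :=
  ∑' m : ℤ, if 0 < μ (Set.Icc ((m : ℝ) * R) (((m : ℝ) + 1) * R))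
    then (μ (enlarge a ((m : ℝ) * R) (((m : ℝ) + 1) * R))).toReal ^ q else 0

/-- The coarse multifractal moment function
`β_a(q) = inf{β : limsup_{r→0⁺} r^β Σ_{B ∈ B_r^*} μ(B̄^a)^q = 0}`.
(For the nonnegative quantity `r^β · Σ…`, vanishing of the `limsup` as `r → 0⁺`
is the same as convergence to `0`.) -/
def betaA (μ : Measure ℝ) (a q : ℝ) : ℝ :=
  sInf {β : ℝ | Filter.Tendsto (fun R => R ^ β * gridSum μ a q R)
    (nhdsWithin 0 (Set.Ioi 0)) (nhds 0)}

/-- `F` is a "fractal subset" of `[0,1]`: compact, Lebesgue-null, containing `0` and `1`. -/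
def IsFractalSubset (F : Set ℝ) : Prop :=
  IsCompact F ∧ F ⊆ Set.Icc 0 1 ∧ (0 : ℝ) ∈ F ∧ (1 : ℝ) ∈ F ∧ MeasureTheory.volume F = 0

/-- The complementary intervals `I_n = (l n, r n)` of `F` in `[0,1]`, enumerated with
nonincreasing lengths. -/
structure FractalComplement (F : Set ℝ) where
  l : ℕ → ℝ
  r : ℕ → ℝ
  lt : ∀ n, l n < r n
  disj : Pairwise fun n m => Disjoint (Set.Ioo (l n) (r n)) (Set.Ioo (l m) (r m))
  union : (⋃ n, Set.Ioo (l n) (r n)) = Set.Icc (0 : ℝ) 1 \ F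
  mono : ∀ n, r (n + 1) - l (n + 1) ≤ r n - l n

/-- The length `|I_n|` of the `n`-th complementary interval. -/
def FractalComplement.len {F : Set ℝ} (c : FractalComplement F) (n : ℕ) : ℝ := c.r n - c.l n

/-- The enlargement `Ī_n^a` of the closure of the complementary interval `I_n`. -/
def FractalComplement.I {F : Set ℝ} (c : FractalComplement F) (a : ℝ) (n : ℕ) : Set ℝ :=
  enlarge a (c.l n) (c.r n)

/-- The lacunarity condition with constant `lam`: every interval `[x-r, x+r]` with `x ∈ F`
and `0 < r ≤ 1` contains a complementary interval of length at least `lam * r`. -/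
def Lacunary {F : Set ℝ} (c : FractalComplement F) (lam : ℝ) : Prop :=
  ∀ x ∈ F, ∀ R : ℝ, 0 < R → R ≤ 1 → ∃ n,
    Set.Ioo (c.l n) (c.r n) ⊆ Set.Icc (x - R) (x + R) ∧ lam * R ≤ c.len n

/-- The topological support of `μ` is exactly `F`. -/
def HasSupport (μ : Measure ℝ) (F : Set ℝ) : Prop :=
  μ Fᶜ = 0 ∧ ∀ x ∈ F, ∀ ε : ℝ, 0 < ε → 0 < μ (Set.Ioo (x - ε) (x + ε))

/-! The `n` largest gaps have total length at most `1`, so `|I_n| ≤ 1/n` and `Ī_n^a` lies in the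
ball of radius `(1+a)|I_n|` about the endpoint `l n ∈ F`; the density condition gives the upper
bound. For the lower bound take `r = n^{-2/c₁}`. If `|I_n| < λ r`, lacunarity puts every point of
`F` within `r` of one of the gaps `I_0, …, I_{n-1}`, and these thickened gaps carry `μ`-mass at most
`2 n r^{c₁} = 2/n < 1`. Hence `|I_n| ≥ λ r`, and since `aλ ≥ 2` the enlargement `Ī_n^a` contains
the ball of radius `r` about `l n`, of mass at least `r^{c₂} = n^{-2c₂/c₁}`. -/

lemma measureReal_Icc_le_of_measure_Icc_eq_zero {μ : Measure ℝ} [IsFiniteMeasure μ] {s t R : ℝ}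
    (hst : μ (Icc s t) = 0) (hR : 0 ≤ R) :
    μ.real (Icc (s - R) (t + R)) ≤ μ.real (Icc (s - R) (s + R)) + μ.real (Icc (t - R) (t + R)) := by
  have hsub : Icc (s - R) (t + R) ⊆ Icc (s - R) (s + R) ∪ Icc s t ∪ Icc (t - R) (t + R) := by
    rintro x ⟨hx1, hx2⟩
    by_cases h1 : x ≤ s + R
    · exact Or.inl (Or.inl ⟨hx1, h1⟩)
    by_cases h2 : t - R ≤ x
    · exact Or.inr ⟨h2, hx2⟩
    exact Or.inl (Or.inr ⟨by linarith, by linarith⟩)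
  calc μ.real (Icc (s - R) (t + R))
      ≤ μ.real (Icc (s - R) (s + R) ∪ Icc s t ∪ Icc (t - R) (t + R)) := measureReal_mono hsub
    _ ≤ μ.real (Icc (s - R) (s + R)) + μ.real (Icc s t) + μ.real (Icc (t - R) (t + R)) := by
      grw [measureReal_union_le, measureReal_union_le]
    _ = μ.real (Icc (s - R) (s + R)) + μ.real (Icc (t - R) (t + R)) := by
      rw [show μ.real (Icc s t) = 0 by simp [Measure.real, hst], add_zero]

lemma eventually_const_mul_rpow_neg_le (C : ℝ) {e e' : ℝ} (h : e' < e) :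
    ∀ᶠ n : ℕ in atTop, C * (n : ℝ) ^ (-e) ≤ (n : ℝ) ^ (-e') := by
  have hgrow : ∀ᶠ x : ℝ in atTop, C ≤ x ^ (e - e') :=
    (tendsto_rpow_atTop (sub_pos.2 h)).eventually_ge_atTop C
  filter_upwards [tendsto_natCast_atTop_atTop.eventually (hgrow.and (eventually_gt_atTop 0))]
    with n ⟨hC, hn⟩
  calc C * (n : ℝ) ^ (-e) ≤ (n : ℝ) ^ (e - e') * (n : ℝ) ^ (-e) := by gcongr
    _ = (n : ℝ) ^ (-e') := by rw [← Real.rpow_add hn]; ring_nf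

namespace FractalComplement

variable {F : Set ℝ} (c : FractalComplement F) {μ : Measure ℝ} {lam ρ c₁ a : ℝ}

lemma len_pos (n : ℕ) : 0 < c.len n := sub_pos.2 (c.lt n)

lemma len_antitone : Antitone c.len := antitone_nat_of_succ_le c.mono

lemma Ioo_subset_Icc_diff (n : ℕ) : Ioo (c.l n) (c.r n) ⊆ Icc 0 1 \ F :=
  c.union ▸ subset_iUnion (fun k => Ioo (c.l k) (c.r k)) n

lemma Icc_subset_of_Ioo_subset {s : Set ℝ} (hs : IsClosed s) {n : ℕ}
    (h : Ioo (c.l n) (c.r n) ⊆ s) : Icc (c.l n) (c.r n) ⊆ s := by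
  rw [← closure_Ioo (c.lt n).ne]
  exact closure_minimal h hs

lemma Icc_subset_Icc_zero_one (n : ℕ) : Icc (c.l n) (c.r n) ⊆ Icc 0 1 :=
  c.Icc_subset_of_Ioo_subset isClosed_Icc ((c.Ioo_subset_Icc_diff n).trans sdiff_subset)

lemma mem_of_forall_notMem_Ioo {x : ℝ} (hx : x ∈ Icc (0 : ℝ) 1)
    (h : ∀ k, x ∉ Ioo (c.l k) (c.r k)) : x ∈ F := by
  by_contra hxF
  have hx' : x ∈ ⋃ k, Ioo (c.l k) (c.r k) := c.union ▸ ⟨hx, hxF⟩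
  obtain ⟨k, hk⟩ := mem_iUnion.1 hx'
  exact h k hk

lemma l_mem (n : ℕ) : c.l n ∈ F := by
  refine c.mem_of_forall_notMem_Ioo
    (c.Icc_subset_Icc_zero_one n (left_mem_Icc.2 (c.lt n).le)) fun k hk => ?_
  have hkn : k ≠ n := by rintro rfl; exact hk.1.false
  have hdisj := Ioo_disjoint_Ioo.1 (c.disj hkn)
  have := c.lt n
  simp only [min_le_iff, le_max_iff] at hdisj
  rcases hk with ⟨h1, h2⟩
  rcases hdisj with (h | h) | (h | h) <;> linarith

lemma r_mem (n : ℕ) : c.r n ∈ F := by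
  refine c.mem_of_forall_notMem_Ioo
    (c.Icc_subset_Icc_zero_one n (right_mem_Icc.2 (c.lt n).le)) fun k hk => ?_
  have hkn : k ≠ n := by rintro rfl; exact hk.2.false
  have hdisj := Ioo_disjoint_Ioo.1 (c.disj hkn)
  have := c.lt n
  simp only [min_le_iff, le_max_iff] at hdisj
  rcases hk with ⟨h1, h2⟩
  rcases hdisj with (h | h) | (h | h) <;> linarith

lemma sum_len_le_one (n : ℕ) : ∑ m ∈ Finset.range n, c.len m ≤ 1 := by
  have hvol : volume (⋃ m ∈ Finset.range n, Ioo (c.l m) (c.r m))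
      = ENNReal.ofReal (∑ m ∈ Finset.range n, c.len m) := by
    rw [measure_biUnion_finset (fun i _ j _ hij => c.disj hij) (fun i _ => measurableSet_Ioo),
      ENNReal.ofReal_sum_of_nonneg (fun m _ => (c.len_pos m).le)]
    simp [Real.volume_Ioo, FractalComplement.len]
  have hsub : (⋃ m ∈ Finset.range n, Ioo (c.l m) (c.r m)) ⊆ Icc 0 1 :=
    iUnion₂_subset fun m _ => Ioo_subset_Icc_self.trans (c.Icc_subset_Icc_zero_one m)
  have hle := measure_mono (μ := volume) hsub
  rw [hvol, Real.volume_Icc, sub_zero] at hle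
  exact (ENNReal.ofReal_le_ofReal_iff zero_le_one).1 hle

lemma natCast_mul_len_le_one (n : ℕ) : n * c.len n ≤ 1 := by
  have h := (Finset.range n).card_nsmul_le_sum c.len (c.len n)
    fun m hm => c.len_antitone (Finset.mem_range.1 hm).le
  rw [Finset.card_range, nsmul_eq_mul] at h
  exact h.trans (c.sum_len_le_one n)

lemma Icc_subset_I (n : ℕ) :
    Icc (c.l n - a * c.len n / 2) (c.l n + a * c.len n / 2) ⊆ c.I a n :=
  Icc_subset_Icc (by simp [len]) (by have := c.lt n; simp only [len]; linarith)

lemma I_subset_Icc (ha : 0 ≤ a) (n : ℕ) :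
    c.I a n ⊆ Icc (c.l n - (1 + a) * c.len n) (c.l n + (1 + a) * c.len n) := by
  have := c.len_pos n
  exact Icc_subset_Icc (by simp only [len] at *; nlinarith) (by simp only [len] at *; nlinarith)

lemma measure_Icc_eq_zero [NullSingletonClass μ] (hμ : μ Fᶜ = 0) (n : ℕ) :
    μ (Icc (c.l n) (c.r n)) = 0 := by
  rw [← measure_congr Ioo_ae_eq_Icc]
  exact measure_mono_null (fun x hx => (c.Ioo_subset_Icc_diff n hx).2) hμ

lemma subset_biUnion_of_len_lt {R : ℝ} (hlac : Lacunary c lam) (hR0 : 0 < R) (hR1 : R ≤ 1)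
    {n : ℕ} (hn : c.len n < lam * R) :
    F ⊆ ⋃ k ∈ Finset.range n, Icc (c.l k - R) (c.r k + R) := by
  intro x hx
  obtain ⟨k, hk_sub, hk_len⟩ := hlac x hx R hR0 hR1
  have hkn : k < n := by
    by_contra! hnk
    exact (hk_len.trans (c.len_antitone hnk)).not_gt hn
  have hk := c.Icc_subset_of_Ioo_subset isClosed_Icc hk_sub
  have hl := (hk (left_mem_Icc.2 (c.lt k).le)).1
  have hr := (hk (right_mem_Icc.2 (c.lt k).le)).2
  have := c.lt k
  exact mem_biUnion (Finset.mem_range.2 hkn) ⟨by linarith, by linarith⟩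

lemma lam_mul_le_len [IsProbabilityMeasure μ] [NullSingletonClass μ] {R : ℝ}
    (hlac : Lacunary c lam) (hμ : μ Fᶜ = 0)
    (hup : ∀ x ∈ F, ∀ R : ℝ, 0 < R → R ≤ ρ → μ.real (Icc (x - R) (x + R)) ≤ R ^ c₁)
    (hR0 : 0 < R) (hR1 : R ≤ 1) (hRρ : R ≤ ρ) {n : ℕ} (hn : 2 * n * R ^ c₁ < 1) :
    lam * R ≤ c.len n := by
  by_contra! hlen
  have hpiece (k : ℕ) : μ.real (Icc (c.l k - R) (c.r k + R)) ≤ 2 * R ^ c₁ := by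
    calc μ.real (Icc (c.l k - R) (c.r k + R))
        ≤ μ.real (Icc (c.l k - R) (c.l k + R)) + μ.real (Icc (c.r k - R) (c.r k + R)) :=
          measureReal_Icc_le_of_measure_Icc_eq_zero (c.measure_Icc_eq_zero hμ k) hR0.le
      _ ≤ R ^ c₁ + R ^ c₁ :=
          add_le_add (hup _ (c.l_mem k) R hR0 hRρ) (hup _ (c.r_mem k) R hR0 hRρ)
      _ = 2 * R ^ c₁ := by ring
  have hF : μ.real F = 1 := by rw [measureReal_congr (ae_eq_univ.2 hμ), probReal_univ]
  have : (1 : ℝ) ≤ 2 * n * R ^ c₁ :=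
    calc (1 : ℝ) = μ.real F := hF.symm
      _ ≤ μ.real (⋃ k ∈ Finset.range n, Icc (c.l k - R) (c.r k + R)) :=
          measureReal_mono (c.subset_biUnion_of_len_lt hlac hR0 hR1 hlen) (measure_ne_top _ _)
      _ ≤ ∑ k ∈ Finset.range n, μ.real (Icc (c.l k - R) (c.r k + R)) :=
          measureReal_biUnion_finset_le _ _
      _ ≤ ∑ k ∈ Finset.range n, 2 * R ^ c₁ := Finset.sum_le_sum fun k _ => hpiece k
      _ = 2 * n * R ^ c₁ := by
          simp only [Finset.sum_const, Finset.card_range, nsmul_eq_mul]; ring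
  linarith

lemma eventually_rpow_neg_le_measureReal_I [IsProbabilityMeasure μ] [NullSingletonClass μ]
    {c₂ : ℝ} (hlac : Lacunary c lam) (hlam : 0 < lam) (hμ : μ Fᶜ = 0)
    (hup : ∀ x ∈ F, ∀ R : ℝ, 0 < R → R ≤ ρ → μ.real (Icc (x - R) (x + R)) ≤ R ^ c₁)
    (hlow : ∀ x ∈ F, ∀ R : ℝ, 0 < R → R ≤ ρ → R ^ c₂ ≤ μ.real (Icc (x - R) (x + R)))
    (hρ : 0 < ρ) (hc₁ : 0 < c₁) (hc₂ : 0 ≤ c₂) (ha : 2 / lam ≤ a) :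
    ∀ᶠ n : ℕ in atTop, (n : ℝ) ^ (-(2 * c₂ / c₁)) ≤ μ.real (c.I a n) := by
  have hlam_a : 2 ≤ lam * a := by rwa [div_le_iff₀' hlam] at ha
  have hsmall : ∀ᶠ n : ℕ in atTop, (n : ℝ) ^ (-(2 / c₁)) < min ρ 1 :=
    tendsto_natCast_atTop_atTop.eventually
      ((tendsto_rpow_neg_atTop (by positivity)).eventually (gt_mem_nhds (lt_min hρ one_pos)))
  have hρn : ∀ᶠ n : ℕ in atTop, a / n < ρ :=
    (tendsto_const_div_atTop_nhds_zero_nat a).eventually (gt_mem_nhds hρ)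
  filter_upwards [hsmall, hρn, eventually_ge_atTop 3] with n hsmall hρn hn
  have hn0 : (0 : ℝ) < n := by positivity
  set r := (n : ℝ) ^ (-(2 / c₁)) with hr
  have hr0 : 0 < r := by positivity
  have hrc : 2 * n * r ^ c₁ < 1 := by
    have hn3 : (3 : ℝ) ≤ n := by exact_mod_cast hn
    rw [hr, ← Real.rpow_mul hn0.le, show -(2 / c₁) * c₁ = -(2 : ℕ) by field_simp; norm_num,
      Real.rpow_neg hn0.le, Real.rpow_natCast, ← div_eq_mul_inv, div_lt_one (by positivity)]
    nlinarith
  have hlen := c.lam_mul_le_len hlac hμ hup hr0 (hsmall.le.trans (min_le_right _ _))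
    (hsmall.le.trans (min_le_left _ _)) hrc
  set R := a * c.len n / 2 with hR
  have hrR : r ≤ R := by
    have ha0 : 0 ≤ a := (by positivity : (0 : ℝ) ≤ 2 / lam).trans ha
    nlinarith [mul_le_mul_of_nonneg_left hlen ha0, mul_le_mul_of_nonneg_right hlam_a hr0.le]
  have hRρ : R ≤ ρ := by
    have := c.natCast_mul_len_le_one n
    have : a * c.len n ≤ a / n := by rw [le_div_iff₀ hn0]; nlinarith
    linarith
  calc (n : ℝ) ^ (-(2 * c₂ / c₁)) = r ^ c₂ := by rw [hr, ← Real.rpow_mul hn0.le]; ring_nf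
    _ ≤ R ^ c₂ := Real.rpow_le_rpow hr0.le hrR hc₂
    _ ≤ μ.real (Icc (c.l n - R) (c.l n + R)) := hlow _ (c.l_mem n) R (hr0.trans_le hrR) hRρ
    _ ≤ μ.real (c.I a n) := measureReal_mono (c.Icc_subset_I n) (measure_ne_top _ _)

lemma eventually_measureReal_I_le_rpow_neg [IsFiniteMeasure μ] {c₃ : ℝ}
    (hup : ∀ x ∈ F, ∀ R : ℝ, 0 < R → R ≤ ρ → μ.real (Icc (x - R) (x + R)) ≤ R ^ c₁)
    (hρ : 0 < ρ) (hc₁ : 0 ≤ c₁) (hc₃ : c₃ < c₁) (ha : 0 ≤ a) :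
    ∀ᶠ n : ℕ in atTop, μ.real (c.I a n) ≤ (n : ℝ) ^ (-c₃) := by
  filter_upwards [(tendsto_const_div_atTop_nhds_zero_nat (1 + a)).eventually (gt_mem_nhds hρ),
    eventually_const_mul_rpow_neg_le ((1 + a) ^ c₁) hc₃, eventually_gt_atTop 0]
    with n hρn hpow hn
  have hn0 : (0 : ℝ) < n := by exact_mod_cast hn
  set R := (1 + a) * c.len n
  have hR0 : 0 < R := by have := c.len_pos n; positivity
  have hRn : R ≤ (1 + a) / n := by
    have := c.natCast_mul_len_le_one n
    rw [le_div_iff₀ hn0]; nlinarith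
  calc μ.real (c.I a n) ≤ μ.real (Icc (c.l n - R) (c.l n + R)) :=
        measureReal_mono (c.I_subset_Icc ha n) (measure_ne_top _ _)
    _ ≤ R ^ c₁ := hup _ (c.l_mem n) R hR0 (hRn.trans hρn.le)
    _ ≤ ((1 + a) / n) ^ c₁ := Real.rpow_le_rpow hR0.le hRn hc₁
    _ = (1 + a) ^ c₁ * (n : ℝ) ^ (-c₁) := by
        rw [Real.div_rpow (by linarith) hn0.le, Real.rpow_neg hn0.le, div_eq_mul_inv]
    _ ≤ (n : ℝ) ^ (-c₃) := hpow

end FractalComplement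

theorem stmt_14_general (F : Set ℝ) (c : FractalComplement F)
    (lam : ℝ) (hlam0 : 0 < lam) (hlac : Lacunary c lam)
    (μ : Measure ℝ) [IsProbabilityMeasure μ] [NullSingletonClass μ] (hsupp : HasSupport μ F)
    (c₁ c₂ ρ : ℝ) (hc₁ : 0 < c₁) (hc₁₂ : c₁ ≤ c₂) (hρ : 0 < ρ)
    (hdens : ∀ x ∈ F, ∀ R : ℝ, 0 < R → R ≤ ρ →
      R ^ c₂ ≤ (μ (Set.Icc (x - R) (x + R))).toReal ∧
      (μ (Set.Icc (x - R) (x + R))).toReal ≤ R ^ c₁)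
    (a : ℝ) (ha : 2 / lam ≤ a) :
    ∃ c₃ c₄ : ℝ, ∃ N₀ : ℕ, 0 < c₃ ∧ c₃ ≤ c₄ ∧ ∀ n : ℕ, N₀ ≤ n →
      (n : ℝ) ^ (-c₄) ≤ (μ (c.I a n)).toReal ∧
      (μ (c.I a n)).toReal ≤ (n : ℝ) ^ (-c₃) := by
  have hup x hx R hR hRρ := (hdens x hx R hR hRρ).2
  have hlow x hx R hR hRρ := (hdens x hx R hR hRρ).1
  have ha0 : 0 ≤ a := (by positivity : (0 : ℝ) ≤ 2 / lam).trans ha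
  have hlower := c.eventually_rpow_neg_le_measureReal_I hlac hlam0 hsupp.1 hup hlow hρ hc₁
    (hc₁.trans_le hc₁₂).le ha
  have hupper := c.eventually_measureReal_I_le_rpow_neg hup hρ hc₁.le (half_lt_self hc₁) ha0
  obtain ⟨N₀, hN₀⟩ := eventually_atTop.1 ((hlower.and hupper).and (eventually_ge_atTop 1))
  refine ⟨c₁ / 2, max (c₁ / 2) (2 * c₂ / c₁), N₀, by positivity, le_max_left _ _, fun n hn => ?_⟩
  obtain ⟨⟨hlo, hhi⟩, hn1⟩ := hN₀ n hn
  have hmono : (n : ℝ) ^ (-max (c₁ / 2) (2 * c₂ / c₁)) ≤ (n : ℝ) ^ (-(2 * c₂ / c₁)) :=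
    Real.rpow_le_rpow_of_exponent_le (by exact_mod_cast hn1) (neg_le_neg (le_max_right _ _))
  exact ⟨hmono.trans hlo, hhi⟩

/-- under the lacunarity and density conditions, the measures of the
enlarged complementary intervals satisfy polynomial bounds `n^{-c₄} ≤ μ(Ī_n^a) ≤ n^{-c₃}`
(equation (gdensity) in the proof of Theorem 4.5). -/
theorem stmt_14 (F : Set ℝ) (hF : IsFractalSubset F) (c : FractalComplement F)
    (lam : ℝ) (hlam0 : 0 < lam) (hlam1 : lam ≤ 1) (hlac : Lacunary c lam)
    (μ : Measure ℝ) [IsProbabilityMeasure μ] [NullSingletonClass μ] (hsupp : HasSupport μ F)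
    (c₁ c₂ ρ : ℝ) (hc₁ : 0 < c₁) (hc₁₂ : c₁ ≤ c₂) (hρ : 0 < ρ)
    (hdens : ∀ x ∈ F, ∀ R : ℝ, 0 < R → R ≤ ρ →
      R ^ c₂ ≤ (μ (Set.Icc (x - R) (x + R))).toReal ∧
      (μ (Set.Icc (x - R) (x + R))).toReal ≤ R ^ c₁)
    (a : ℝ) (ha : 2 / lam ≤ a) :
    ∃ c₃ c₄ : ℝ, ∃ N₀ : ℕ, 0 < c₃ ∧ c₃ ≤ c₄ ∧ ∀ n : ℕ, N₀ ≤ n →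
      (n : ℝ) ^ (-c₄) ≤ (μ (c.I a n)).toReal ∧
      (μ (c.I a n)).toReal ≤ (n : ℝ) ^ (-c₃) :=
  stmt_14_general F c lam hlam0 hlac μ hsupp c₁ c₂ ρ hc₁ hc₁₂ hρ hdens a ha
end
end

section
/- Let ψ_1, …, ψ_m (m ≥ 2) be contracting similarities of ℝ with ratios r_1, …, r_m ∈ (0,1) such that the intervals ψ_i([0,1]) ⊆ [0,1] are pairwise disjoint and ordered: 0 = ψ_1(0) < ψ_1(1) < ψ_2(0) < ⋯ < ψ_m(0) < ψ_m(1) = 1, let F be the attractor (F = ⋃ ψ_i(F)), and let μ be the self-similar probability measure associated to weights p_1, …, p_m > 0 with Σ p_i = 1, i.e. the unique Borel probability measure with μ(A) = Σ_{i=1}^m p_i μ(ψ_i^{-1}(A)) for all Borel A. Then for every q ∈ ℝ and every a > 0, β_a(q) equals the unique real number β satisfying Σ_{i=1}^m p_i^q r_i^β = 1. -/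
/-!
Write the maps as `x ↦ b i + r i * x`. Invariance forces `μ` to live on `[0, 1]`, so the cylinder
`ψ_w([0, 1])` of a word `w` has mass `p_w`. At scale `R`, cut every address at its first prefix
`w` with `r_w ≤ R`: these stopping words have `r_w` comparable to `R`, their cylinders are
`gap * R`-separated, and `∑ p_w ^ q * r_w ^ β = 1` by the choice of `β`, so
`∑ p_w ^ q ≍ R ^ (-β)`. Each stopping cylinder meets boundedly many grid cells and vice versa,
which compares the grid sum with `∑ p_w ^ q`: for `q ≥ 0` through the largest weight meeting an
enlarged cell, for `q < 0` through a finer stopping cylinder inside the enlarged cell (upper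
bound) and through comparability of the weights of nearby stopping cylinders (lower bound).
Hence the grid sum is `≍ R ^ (-β)`, which pins `β_a(q) = β`.
-/

open MeasureTheory Filter Set
open scoped Classical

noncomputable section

open scoped Topology

/-! ### Elementary inequalities and counting -/

lemma eq_add_mul_of_abs_sub_eq {f : ℝ → ℝ} {r : ℝ} (hf : ∀ x y, |f x - f y| = r * |x - y|)
    (h01 : f 0 < f 1) (x : ℝ) : f x = f 0 + r * x := by
  have hr : f 1 - f 0 = r := by
    have := hf 1 0
    rwa [abs_of_pos (sub_pos.2 h01), sub_zero, abs_one, mul_one] at this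
  have e0 : (f x - f 0) ^ 2 = (r * x) ^ 2 := by
    rw [← sq_abs, hf, sub_zero, mul_pow, sq_abs, mul_pow]
  have e1 : (f x - f 1) ^ 2 = (r * (x - 1)) ^ 2 := by rw [← sq_abs, hf, mul_pow, sq_abs, mul_pow]
  -- subtracting the squared distances to `1` from those to `0` leaves a linear equation
  have : r * (f x - f 0 - r * x) = 0 := by
    linear_combination (e0 - e1) / 2 + (-(f x - f 0) + (f 1 - f 0 + r) / 2) * hr
  have hr0 : r ≠ 0 := by linarith
  linarith [(mul_eq_zero.1 this).resolve_left hr0]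

lemma interlaced_lt {m : ℕ} {x y : ℕ → ℝ} (hxy : ∀ i, i < m → x i < y i)
    (hyx : ∀ i, i + 1 < m → y i < x (i + 1)) {i j : ℕ} (hij : i < j) (hj : j < m) :
    y i < x j := by
  induction j, hij using Nat.le_induction with
  | base => exact hyx i hj
  | succ j hij ih => exact (ih (by omega)).trans ((hxy j (by omega)).trans (hyx j hj))

lemma Int.floor_div_ne_floor_div {s x y : ℝ} (hs : 0 < s) (hxy : s ≤ |x - y|) :
    ⌊x / s⌋ ≠ ⌊y / s⌋ := by
  intro h
  have := abs_sub_lt_one_of_floor_eq_floor h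
  rw [← sub_div, abs_div, abs_of_pos hs, div_lt_one hs] at this
  exact this.not_ge hxy

lemma Finset.card_le_of_injOn_int {α : Type*} {s : Finset α} {φ : α → ℤ} {A B : ℝ}
    (hinj : InjOn φ s) (hAB : A ≤ B) (hrange : ∀ x ∈ s, A ≤ φ x ∧ (φ x : ℝ) ≤ B) :
    (s.card : ℝ) ≤ B - A + 1 := by
  have hmaps : MapsTo φ s (Finset.Icc ⌈A⌉ ⌊B⌋) := fun x hx =>
    Finset.mem_Icc.2 ⟨Int.ceil_le.2 (hrange x hx).1, Int.le_floor.2 (hrange x hx).2⟩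
  have hcard : ((Finset.Icc ⌈A⌉ ⌊B⌋).card : ℤ) = ⌊B⌋ + 1 - ⌈A⌉ :=
    Int.card_Icc_of_le _ _ ((Int.ceil_mono hAB).trans (Int.ceil_le_floor_add_one B))
  have hcard' : ((Finset.Icc ⌈A⌉ ⌊B⌋).card : ℝ) = ⌊B⌋ + 1 - ⌈A⌉ := by exact_mod_cast hcard
  calc (s.card : ℝ) ≤ (Finset.Icc ⌈A⌉ ⌊B⌋).card := by
        exact_mod_cast Finset.card_le_card_of_injOn φ hmaps hinj
    _ ≤ B - A + 1 := by linarith [hcard', Int.floor_le B, Int.le_ceil A]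

lemma Finset.sum_sum_filter_le_mul_sum {ι κ : Type*} (K : Finset ι) (W : Finset κ)
    (P : ι → κ → Prop) [∀ k w, Decidable (P k w)] {x : κ → ℝ} (hx : ∀ w ∈ W, 0 ≤ x w) {C : ℝ}
    (hC : ∀ w ∈ W, ((K.filter (P · w)).card : ℝ) ≤ C) :
    ∑ k ∈ K, ∑ w ∈ W.filter (P k), x w ≤ C * ∑ w ∈ W, x w := by
  simp only [Finset.sum_filter]
  rw [Finset.sum_comm, Finset.mul_sum]
  refine Finset.sum_le_sum fun w hw => ?_
  rw [← Finset.sum_filter, Finset.sum_const, nsmul_eq_mul]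
  exact mul_le_mul_of_nonneg_right (hC w hw) (hx w hw)

lemma rpow_le_max_one_mul_rpow {c R x : ℝ} (e : ℝ) (hc : 0 < c) (hR : 0 < R)
    (hcx : c * R ≤ x) (hxR : x ≤ R) : x ^ e ≤ max 1 (c ^ e) * R ^ e := by
  rw [max_mul_of_nonneg _ _ (Real.rpow_nonneg hR.le e), one_mul, ← Real.mul_rpow hc.le hR.le]
  rcases le_or_gt 0 e with he | he
  · exact (Real.rpow_le_rpow ((mul_pos hc hR).le.trans hcx) hxR he).trans (le_max_left _ _)
  · exact (Real.rpow_le_rpow_of_nonpos (by positivity) hcx he.le).trans (le_max_right _ _)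

lemma min_one_mul_rpow_le_rpow {c R x : ℝ} (e : ℝ) (hc : 0 < c) (hR : 0 < R)
    (hcx : c * R ≤ x) (hxR : x ≤ R) : min 1 (c ^ e) * R ^ e ≤ x ^ e := by
  rw [min_mul_of_nonneg _ _ (Real.rpow_nonneg hR.le e), one_mul, ← Real.mul_rpow hc.le hR.le]
  rcases le_or_gt 0 e with he | he
  · exact (min_le_right _ _).trans (Real.rpow_le_rpow (by positivity) hcx he)
  · exact (min_le_left _ _).trans
      (Real.rpow_le_rpow_of_nonpos ((mul_pos hc hR).trans_le hcx) hxR he.le)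

lemma Finset.rpow_sum_le_rpow_mul_sum_rpow {ι : Type*} {T : Finset ι} (hT : T.Nonempty)
    {x : ι → ℝ} (hx : ∀ i ∈ T, 0 ≤ x i) {q N : ℝ} (hq : 0 ≤ q) (hN : (T.card : ℝ) ≤ N) :
    (∑ i ∈ T, x i) ^ q ≤ N ^ q * ∑ i ∈ T, x i ^ q := by
  obtain ⟨j, hj, hmax⟩ := T.exists_max_image x hT
  have hsum : ∑ i ∈ T, x i ≤ N * x j := by
    calc ∑ i ∈ T, x i ≤ T.card • x j := Finset.sum_le_card_nsmul T x (x j) hmax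
      _ = T.card * x j := nsmul_eq_mul _ _
      _ ≤ N * x j := mul_le_mul_of_nonneg_right hN (hx j hj)
  calc (∑ i ∈ T, x i) ^ q ≤ (N * x j) ^ q :=
        Real.rpow_le_rpow (Finset.sum_nonneg hx) hsum hq
    _ = N ^ q * x j ^ q := Real.mul_rpow ((Nat.cast_nonneg _).trans hN) (hx j hj)
    _ ≤ N ^ q * ∑ i ∈ T, x i ^ q := by
      gcongr
      · exact Real.rpow_nonneg ((Nat.cast_nonneg _).trans hN) q
      · exact Finset.single_le_sum (fun i hi => Real.rpow_nonneg (hx i hi) q) hj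

/-! ### Grid cells and the moment function -/

def gridCell (R : ℝ) (k : ℤ) : Set ℝ := Icc (k * R) ((k + 1) * R)

def enlargedCell (a R : ℝ) (k : ℤ) : Set ℝ := enlarge a (k * R) ((k + 1) * R)

lemma enlargedCell_eq_Icc (a R : ℝ) (k : ℤ) :
    enlargedCell a R k = Icc (k * R - a * R / 2) ((k + 1) * R + a * R / 2) := by
  simp only [enlargedCell, enlarge]
  ring_nf

lemma enlargedCell_zero (R : ℝ) (k : ℤ) : enlargedCell 0 R k = gridCell R k := by
  simp [enlargedCell_eq_Icc, gridCell]

lemma gridCell_subset_enlargedCell {a R : ℝ} (ha : 0 ≤ a) (hR : 0 ≤ R) (k : ℤ) :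
    gridCell R k ⊆ enlargedCell a R k := by
  rw [enlargedCell_eq_Icc]
  exact Icc_subset_Icc (by nlinarith) (by nlinarith)

def cellTerm (μ : Measure ℝ) (a q R : ℝ) (k : ℤ) : ℝ :=
  if 0 < μ (gridCell R k) then μ.real (enlargedCell a R k) ^ q else 0

lemma cellTerm_nonneg (μ : Measure ℝ) (a q R : ℝ) (k : ℤ) : 0 ≤ cellTerm μ a q R k := by
  unfold cellTerm
  split_ifs <;> positivity

def gridIndices (R : ℝ) : Finset ℤ := Finset.Icc (-1) ⌈1 / R⌉

lemma disjoint_gridCell_Icc {R : ℝ} (hR : 0 < R) {k : ℤ} (hk : k ∉ gridIndices R) :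
    Disjoint (gridCell R k) (Icc 0 1) := by
  rw [gridIndices, Finset.mem_Icc, not_and_or, not_le, not_le] at hk
  rw [Set.disjoint_left]
  rintro x ⟨hx1, hx2⟩ ⟨hx3, hx4⟩
  rcases hk with hk | hk
  · have : (k : ℝ) + 1 ≤ -1 := by exact_mod_cast (show k + 1 ≤ -1 by omega)
    nlinarith
  · have : 1 / R < k := (Int.le_ceil _).trans_lt (by exact_mod_cast hk)
    rw [div_lt_iff₀ hR] at this
    nlinarith

lemma Icc_subset_iUnion_gridCell {R : ℝ} (hR : 0 < R) :
    Icc 0 1 ⊆ ⋃ k ∈ gridIndices R, gridCell R k := by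
  rintro x ⟨hx0, hx1⟩
  have hmem : ⌊x / R⌋ ∈ gridIndices R := by
    rw [gridIndices, Finset.mem_Icc]
    constructor
    · linarith [Int.floor_nonneg.2 (div_nonneg hx0 hR.le)]
    · exact Int.floor_le_iff.2 ((div_le_div_of_nonneg_right hx1 hR.le).trans_lt
        (by linarith [Int.le_ceil (1 / R)]))
  refine mem_biUnion hmem ⟨?_, ?_⟩
  · calc (⌊x / R⌋ : ℝ) * R ≤ x / R * R := by gcongr; exact Int.floor_le _
      _ = x := div_mul_cancel₀ x hR.ne'
  · calc x = x / R * R := (div_mul_cancel₀ x hR.ne').symm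
      _ ≤ (⌊x / R⌋ + 1) * R := by gcongr; exact (Int.lt_floor_add_one _).le

lemma gridSum_eq_sum_cellTerm {μ : Measure ℝ} {a q R : ℝ} (hR : 0 < R)
    (hμ : μ (Icc 0 1)ᶜ = 0) :
    gridSum μ a q R = ∑ k ∈ gridIndices R, cellTerm μ a q R k := by
  refine tsum_eq_sum fun k hk => ?_
  change cellTerm μ a q R k = 0
  rw [cellTerm, if_neg (not_lt.2 (le_of_eq
    (measure_mono_null (disjoint_gridCell_Icc hR hk).subset_compl_right hμ)))]

lemma card_enlargedCell_meet_Icc_le {a R s t : ℝ} (ha : 0 ≤ a) (hR : 0 < R) (hst : s ≤ t)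
    (htR : t - s ≤ R) (K : Finset ℤ) :
    ((K.filter fun k => (Icc s t ∩ enlargedCell a R k).Nonempty).card : ℝ) ≤ a + 3 := by
  refine (Finset.card_le_of_injOn_int (φ := id) (A := (s - a * R / 2) / R - 1)
    (B := (t + a * R / 2) / R) (injOn_id _) ?_ ?_).trans ?_
  · have : (s - a * R / 2) / R ≤ (t + a * R / 2) / R := by gcongr; nlinarith
    linarith
  · intro k hk
    obtain ⟨z, ⟨hsz, hzt⟩, hz⟩ := (Finset.mem_filter.1 hk).2
    rw [enlargedCell_eq_Icc, mem_Icc] at hz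
    constructor
    · rw [id, sub_le_iff_le_add, div_le_iff₀ hR]; linarith
    · rw [id, le_div_iff₀ hR]; linarith
  · rw [show (t + a * R / 2) / R - ((s - a * R / 2) / R - 1) + 1 = (t - s + a * R) / R + 2 by
      field_simp; ring]
    have : (t - s + a * R) / R ≤ 1 + a := by rw [div_le_iff₀ hR]; nlinarith
    linarith

lemma gridSum_nonneg (μ : Measure ℝ) (a q R : ℝ) : 0 ≤ gridSum μ a q R :=
  tsum_nonneg fun _ => by split_ifs <;> positivity

lemma tendsto_rpow_mul_gridSum {μ : Measure ℝ} {a q β β' C : ℝ}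
    (hupper : ∀ R, 0 < R → R < 1 → gridSum μ a q R ≤ C * R ^ (-β)) (hβ' : β < β') :
    Tendsto (fun R => R ^ β' * gridSum μ a q R) (𝓝[>] 0) (𝓝 0) := by
  have hlim : Tendsto (fun R : ℝ => C * R ^ (β' - β)) (𝓝[>] 0) (𝓝 (C * 0 ^ (β' - β))) :=
    ((Real.continuousAt_rpow_const 0 _ (Or.inr (sub_pos.2 hβ').le)).tendsto.mono_left
      nhdsWithin_le_nhds).const_mul C
  rw [Real.zero_rpow (sub_pos.2 hβ').ne', mul_zero] at hlim
  refine squeeze_zero' ?_ ?_ hlim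
  · filter_upwards [self_mem_nhdsWithin] with R (hR : 0 < R)
    exact mul_nonneg (Real.rpow_nonneg hR.le _) (gridSum_nonneg μ a q R)
  · filter_upwards [Ioo_mem_nhdsGT one_pos] with R ⟨hR0, hR1⟩
    calc R ^ β' * gridSum μ a q R ≤ R ^ β' * (C * R ^ (-β)) :=
          mul_le_mul_of_nonneg_left (hupper R hR0 hR1) (Real.rpow_nonneg hR0.le _)
      _ = C * R ^ (β' - β) := by
          rw [mul_left_comm, ← Real.rpow_add hR0, ← sub_eq_add_neg]

lemma le_of_tendsto_rpow_mul_gridSum {μ : Measure ℝ} {a q β β' c : ℝ} (hc : 0 < c)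
    (hlower : ∀ R, 0 < R → R < 1 → c * R ^ (-β) ≤ gridSum μ a q R)
    (hβ' : Tendsto (fun R => R ^ β' * gridSum μ a q R) (𝓝[>] 0) (𝓝 0)) : β ≤ β' := by
  by_contra! hlt
  have hfar : ∀ᶠ R in 𝓝[>] (0 : ℝ), c ≤ R ^ β' * gridSum μ a q R := by
    filter_upwards [Ioo_mem_nhdsGT one_pos] with R ⟨hR0, hR1⟩
    calc c ≤ c * R ^ (β' - β) :=
          le_mul_of_one_le_right hc.le (Real.one_le_rpow_of_pos_of_le_one_of_nonpos hR0
            hR1.le (sub_nonpos.2 hlt.le))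
      _ = R ^ β' * (c * R ^ (-β)) := by
          rw [mul_left_comm, ← Real.rpow_add hR0, ← sub_eq_add_neg]
      _ ≤ R ^ β' * gridSum μ a q R :=
          mul_le_mul_of_nonneg_left (hlower R hR0 hR1) (Real.rpow_nonneg hR0.le _)
  obtain ⟨R, hcR, hRc⟩ := (hfar.and (hβ'.eventually_lt_const hc)).exists
  exact hRc.not_ge hcR

lemma betaA_eq_of_bounds {μ : Measure ℝ} {a q β c C : ℝ} (hc : 0 < c)
    (hlower : ∀ R, 0 < R → R < 1 → c * R ^ (-β) ≤ gridSum μ a q R)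
    (hupper : ∀ R, 0 < R → R < 1 → gridSum μ a q R ≤ C * R ^ (-β)) :
    betaA μ a q = β := by
  have hIoi : Ioi β ⊆ {β' | Tendsto (fun R => R ^ β' * gridSum μ a q R) (𝓝[>] 0) (𝓝 0)} :=
    fun _ => tendsto_rpow_mul_gridSum hupper
  have hIci : {β' | Tendsto (fun R => R ^ β' * gridSum μ a q R) (𝓝[>] 0) (𝓝 0)} ⊆ Ici β :=
    fun _ => le_of_tendsto_rpow_mul_gridSum hc hlower
  refine le_antisymm ?_ (le_csInf ⟨β + 1, hIoi (by simp)⟩ hIci)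
  calc betaA μ a q ≤ sInf (Ioi β) := csInf_le_csInf ⟨β, hIci⟩ nonempty_Ioi hIoi
    _ = β := csInf_Ioi

/-! ### The self-similar measure -/

/-- `ψ i x = b i + r i * x`, and `μ` is the self-similar measure with weights `p`. -/
structure OrderedIFS (m : ℕ) where
  b : Fin m → ℝ
  r : Fin m → ℝ
  p : Fin m → ℝ
  r_pos : ∀ i, 0 < r i
  r_lt_one : ∀ i, r i < 1
  p_pos : ∀ i, 0 < p i
  sum_p : ∑ i, p i = 1
  b_nonneg : ∀ i, 0 ≤ b i
  b_add_r_le_one : ∀ i, b i + r i ≤ 1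
  b_add_r_lt : ∀ i j, i < j → b i + r i < b j
  μ : Measure ℝ
  isProbabilityMeasure : IsProbabilityMeasure μ
  measure_eq_sum : ∀ A : Set ℝ, MeasurableSet A →
    μ A = ∑ i, ENNReal.ofReal (p i) * μ ((fun x => b i + r i * x) ⁻¹' A)

namespace OrderedIFS

lemma univ_nonempty {m : ℕ} (S : OrderedIFS m) : (Finset.univ : Finset (Fin m)).Nonempty :=
  Finset.nonempty_of_sum_ne_zero (S.sum_p ▸ one_ne_zero)

variable {m : ℕ} (S : OrderedIFS m)

attribute [instance] OrderedIFS.isProbabilityMeasure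

def map (i : Fin m) (x : ℝ) : ℝ := S.b i + S.r i * x

lemma measure_eq_sum_preimage {A : Set ℝ} (hA : MeasurableSet A) :
    S.μ A = ∑ i, ENNReal.ofReal (S.p i) * S.μ (S.map i ⁻¹' A) :=
  S.measure_eq_sum A hA

lemma sum_ofReal_p : ∑ i, ENNReal.ofReal (S.p i) = 1 := by
  rw [← ENNReal.ofReal_sum_of_nonneg fun i _ => (S.p_pos i).le, S.sum_p, ENNReal.ofReal_one]

lemma p_le_one (i : Fin m) : S.p i ≤ 1 :=
  S.sum_p ▸ Finset.single_le_sum (fun j _ => (S.p_pos j).le) (Finset.mem_univ i)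

lemma map_strictMono (i : Fin m) : StrictMono (S.map i) := fun x y h => by
  simp only [map]
  nlinarith [S.r_pos i]

lemma map_injective (i : Fin m) : Function.Injective (S.map i) :=
  (S.map_strictMono i).injective

lemma dist_map (i : Fin m) (x y : ℝ) : |S.map i x - S.map i y| = S.r i * |x - y| := by
  rw [map, map, show S.b i + S.r i * x - (S.b i + S.r i * y) = S.r i * (x - y) by ring,
    abs_mul, abs_of_pos (S.r_pos i)]

lemma image_map_Icc (i : Fin m) (s t : ℝ) :
    S.map i '' Icc s t = Icc (S.map i s) (S.map i t) := by
  have hr := S.r_pos i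
  ext y
  simp only [mem_image, mem_Icc, map]
  constructor
  · rintro ⟨x, ⟨hsx, hxt⟩, rfl⟩
    constructor <;> nlinarith
  · rintro ⟨h1, h2⟩
    refine ⟨(y - S.b i) / S.r i, ⟨?_, ?_⟩, by field_simp; ring⟩
    · rw [le_div_iff₀ hr]; linarith
    · rw [div_le_iff₀ hr]; linarith

lemma measurableEmbedding_map (i : Fin m) : MeasurableEmbedding (S.map i) :=
  (measurableEmbedding_addLeft (S.b i)).comp (measurableEmbedding_mulLeft₀ (S.r_pos i).ne')

lemma map_mem_Icc (i : Fin m) {x : ℝ} (hx : x ∈ Icc (0 : ℝ) 1) :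
    S.map i x ∈ Icc (S.b i) (S.b i + S.r i) := by
  simp only [map, mem_Icc] at *
  constructor <;> nlinarith [S.r_pos i]

def maxRatio : ℝ := Finset.univ.sup' S.univ_nonempty S.r

lemma le_maxRatio (i : Fin m) : S.r i ≤ S.maxRatio := Finset.le_sup' _ (Finset.mem_univ i)

lemma maxRatio_pos : 0 < S.maxRatio :=
  (S.r_pos _).trans_le (S.le_maxRatio S.univ_nonempty.choose)

lemma maxRatio_lt_one : S.maxRatio < 1 := by
  obtain ⟨i, -, hi⟩ := Finset.exists_mem_eq_sup' S.univ_nonempty S.r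
  rw [maxRatio, hi]
  exact S.r_lt_one i

lemma measure_Icc_div_maxRatio_le {t : ℝ} (ht : 0 ≤ t) :
    S.μ (Icc (-(t / S.maxRatio)) (1 + t / S.maxRatio)) ≤ S.μ (Icc (-t) (1 + t)) := by
  rw [S.measure_eq_sum_preimage (A := Icc (-t) (1 + t)) measurableSet_Icc,
    ← one_mul (S.μ _), ← S.sum_ofReal_p, Finset.sum_mul]
  gcongr with i
  rintro x ⟨hx1, hx2⟩
  have hrt : S.r i * (t / S.maxRatio) ≤ t := by
    calc S.r i * (t / S.maxRatio) ≤ S.maxRatio * (t / S.maxRatio) := by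
          gcongr
          · exact div_nonneg ht S.maxRatio_pos.le
          · exact S.le_maxRatio i
      _ = t := mul_div_cancel₀ t S.maxRatio_pos.ne'
  simp only [mem_preimage, map, mem_Icc]
  constructor <;> nlinarith [S.b_nonneg i, S.b_add_r_le_one i, S.r_pos i]

/-- Each invariance step `t ↦ t / maxRatio` can only shrink the mass of `[-t, 1 + t]`; since
these intervals exhaust `ℝ`, they all carry full mass. -/
lemma measure_Icc_neg_one_add_eq_one {t : ℝ} (ht : 0 < t) : S.μ (Icc (-t) (1 + t)) = 1 := by
  set J : ℕ → Set ℝ := fun n => Icc (-(t / S.maxRatio ^ n)) (1 + t / S.maxRatio ^ n)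
  have hρ := S.maxRatio_pos
  have hJ_le : ∀ n, S.μ (J n) ≤ S.μ (J 0) := by
    intro n
    induction n with
    | zero => exact le_rfl
    | succ n ih =>
      refine le_trans ?_ ih
      simpa only [J, pow_succ, div_div] using
        S.measure_Icc_div_maxRatio_le (div_nonneg ht.le (pow_pos hρ n).le)
  have hJ_mono : Monotone J := fun n k hnk =>
    have : t / S.maxRatio ^ n ≤ t / S.maxRatio ^ k :=
      div_le_div_of_nonneg_left ht.le (pow_pos hρ k)
        (pow_le_pow_of_le_one hρ.le S.maxRatio_lt_one.le hnk)
    Icc_subset_Icc (by linarith) (by linarith)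
  have hJ_univ : ⋃ n, J n = univ := by
    refine eq_univ_of_forall fun x => mem_iUnion.2 ?_
    obtain ⟨n, hn⟩ := pow_unbounded_of_one_lt (|x| / t) (one_lt_inv₀ hρ |>.2 S.maxRatio_lt_one)
    have : |x| ≤ t / S.maxRatio ^ n := by
      rw [inv_pow, div_lt_iff₀ ht] at hn
      rw [le_div_iff₀ (pow_pos hρ n)]
      have := mul_inv_cancel₀ (pow_pos hρ n).ne'
      nlinarith [abs_nonneg x, pow_pos hρ n]
    exact ⟨n, by linarith [neg_abs_le x], by linarith [le_abs_self x]⟩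
  refine le_antisymm prob_le_one ?_
  calc 1 = S.μ (⋃ n, J n) := by rw [hJ_univ, measure_univ]
    _ = ⨆ n, S.μ (J n) := hJ_mono.measure_iUnion
    _ ≤ S.μ (J 0) := iSup_le hJ_le
    _ = S.μ (Icc (-t) (1 + t)) := by simp [J]

lemma measure_compl_Icc : S.μ (Icc 0 1)ᶜ = 0 := by
  have hsub : (Icc (0 : ℝ) 1)ᶜ ⊆ ⋃ n : ℕ, (Icc (-(1 / (n + 1))) (1 + 1 / (n + 1)))ᶜ := by
    intro x hx
    rw [mem_compl_iff, mem_Icc, not_and_or, not_le, not_le] at hx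
    rcases hx with hx | hx
    · obtain ⟨n, hn⟩ := exists_nat_one_div_lt (neg_pos.2 hx)
      exact mem_iUnion.2 ⟨n, fun h => by linarith [h.1]⟩
    · obtain ⟨n, hn⟩ := exists_nat_one_div_lt (sub_pos.2 hx)
      exact mem_iUnion.2 ⟨n, fun h => by linarith [h.2]⟩
  refine measure_mono_null hsub (measure_iUnion_null fun n => ?_)
  rw [prob_compl_eq_zero_iff measurableSet_Icc]
  exact S.measure_Icc_neg_one_add_eq_one (by positivity)

lemma measure_image_map (i : Fin m) {A : Set ℝ} (hA : MeasurableSet A)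
    (hA1 : A ⊆ Icc 0 1) : S.μ (S.map i '' A) = ENNReal.ofReal (S.p i) * S.μ A := by
  rw [S.measure_eq_sum_preimage ((S.measurableEmbedding_map i).measurableSet_image' hA),
    Finset.sum_eq_single i,
    preimage_image_eq A (S.map_injective i)]
  · intro j _ hji
    refine mul_eq_zero_of_right _ (measure_mono_null ?_ S.measure_compl_Icc)
    rintro x ⟨y, hy, hyx⟩ hx01
    have hyi := S.map_mem_Icc i (hA1 hy)
    have hxj := S.map_mem_Icc j hx01
    rw [hyx] at hyi
    rcases lt_or_gt_of_ne hji with h | h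
    · linarith [S.b_add_r_lt j i h, hyi.1, hxj.2]
    · linarith [S.b_add_r_lt i j h, hyi.2, hxj.1]
  · exact fun h => absurd (Finset.mem_univ i) h

lemma exists_gap : ∃ g > 0, ∀ i j : Fin m, i < j → g ≤ S.b j - (S.b i + S.r i) := by
  have : ∀ᶠ g in 𝓝[>] (0 : ℝ), 0 < g ∧ ∀ i j : Fin m, i < j → g ≤ S.b j - (S.b i + S.r i) := by
    refine .and self_mem_nhdsWithin (eventually_all.2 fun i => eventually_all.2 fun j => ?_)
    by_cases hij : i < j
    · filter_upwards [Ioo_mem_nhdsGT (sub_pos.2 (S.b_add_r_lt i j hij))] with g hg _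
      exact hg.2.le
    · exact .of_forall fun _ h => absurd h hij
  exact this.exists

def gap : ℝ := S.exists_gap.choose

lemma gap_pos : 0 < S.gap := S.exists_gap.choose_spec.1

lemma gap_le {i j : Fin m} (h : i < j) : S.gap ≤ S.b j - (S.b i + S.r i) :=
  S.exists_gap.choose_spec.2 i j h

/-! ### Words and cylinders -/

def wordRatio (w : List (Fin m)) : ℝ := (w.map S.r).prod

def wordWeight (w : List (Fin m)) : ℝ := (w.map S.p).prod

@[simp] lemma wordRatio_nil : S.wordRatio [] = 1 := rfl

@[simp] lemma wordWeight_nil : S.wordWeight [] = 1 := rfl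

@[simp] lemma wordRatio_cons (i : Fin m) (w : List (Fin m)) :
    S.wordRatio (i :: w) = S.r i * S.wordRatio w := by
  simp [wordRatio]

@[simp] lemma wordWeight_cons (i : Fin m) (w : List (Fin m)) :
    S.wordWeight (i :: w) = S.p i * S.wordWeight w := by
  simp [wordWeight]

lemma wordRatio_append (u v : List (Fin m)) :
    S.wordRatio (u ++ v) = S.wordRatio u * S.wordRatio v := by
  simp [wordRatio]

lemma wordWeight_append (u v : List (Fin m)) :
    S.wordWeight (u ++ v) = S.wordWeight u * S.wordWeight v := by
  simp [wordWeight]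

lemma wordRatio_pos (w : List (Fin m)) : 0 < S.wordRatio w :=
  List.prod_pos fun _ hx => by
    obtain ⟨i, -, rfl⟩ := List.mem_map.1 hx
    exact S.r_pos i

lemma wordWeight_pos (w : List (Fin m)) : 0 < S.wordWeight w :=
  List.prod_pos fun _ hx => by
    obtain ⟨i, -, rfl⟩ := List.mem_map.1 hx
    exact S.p_pos i

lemma wordWeight_append_le (u t : List (Fin m)) : S.wordWeight (u ++ t) ≤ S.wordWeight u := by
  rw [wordWeight_append]
  refine mul_le_of_le_one_right (S.wordWeight_pos u).le ?_
  induction t with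
  | nil => simp
  | cons i t ih =>
    rw [wordWeight_cons]
    exact mul_le_one₀ (S.p_le_one i) (S.wordWeight_pos t).le ih

lemma wordRatio_le_pow (w : List (Fin m)) : S.wordRatio w ≤ S.maxRatio ^ w.length := by
  induction w with
  | nil => simp
  | cons i w ih =>
    rw [wordRatio_cons, List.length_cons, pow_succ']
    exact mul_le_mul (S.le_maxRatio i) ih (S.wordRatio_pos w).le S.maxRatio_pos.le

lemma prod_map_rpow_mul_rpow (q β : ℝ) (w : List (Fin m)) :
    (w.map fun i => S.p i ^ q * S.r i ^ β).prod = S.wordWeight w ^ q * S.wordRatio w ^ β := by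
  induction w with
  | nil => simp
  | cons i w ih =>
    simp only [List.map_cons, List.prod_cons, ih, wordWeight_cons, wordRatio_cons,
      Real.mul_rpow (S.p_pos i).le (S.wordWeight_pos w).le,
      Real.mul_rpow (S.r_pos i).le (S.wordRatio_pos w).le]
    ring

def offset : List (Fin m) → ℝ
  | [] => 0
  | i :: w => S.map i (offset w)

/-- `ψ_w([0, 1])` for `ψ_w = ψ_{w₁} ∘ ⋯ ∘ ψ_{wₙ}`. -/
def cylinder (w : List (Fin m)) : Set ℝ := Icc (S.offset w) (S.offset w + S.wordRatio w)

lemma cylinder_nil : S.cylinder [] = Icc 0 1 := by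
  simp [cylinder, offset]

lemma cylinder_cons (i : Fin m) (w : List (Fin m)) :
    S.cylinder (i :: w) = S.map i '' S.cylinder w := by
  rw [cylinder, cylinder, image_map_Icc]
  simp only [offset, wordRatio_cons, map]
  ring_nf

lemma measurableSet_cylinder (w : List (Fin m)) : MeasurableSet (S.cylinder w) :=
  measurableSet_Icc

lemma offset_mem_cylinder (w : List (Fin m)) : S.offset w ∈ S.cylinder w :=
  left_mem_Icc.2 (le_add_of_nonneg_right (S.wordRatio_pos w).le)

lemma cylinder_subset_Icc (w : List (Fin m)) : S.cylinder w ⊆ Icc 0 1 := by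
  induction w with
  | nil => rw [cylinder_nil]
  | cons i w ih =>
    rw [cylinder_cons]
    rintro _ ⟨x, hx, rfl⟩
    exact Icc_subset_Icc (S.b_nonneg i) (S.b_add_r_le_one i) (S.map_mem_Icc i (ih hx))

lemma cylinder_cons_subset (i : Fin m) (w : List (Fin m)) :
    S.cylinder (i :: w) ⊆ Icc (S.b i) (S.b i + S.r i) := by
  rw [cylinder_cons]
  rintro _ ⟨x, hx, rfl⟩
  exact S.map_mem_Icc i (S.cylinder_subset_Icc w hx)

lemma measure_cylinder (w : List (Fin m)) :
    S.μ (S.cylinder w) = ENNReal.ofReal (S.wordWeight w) := by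
  induction w with
  | nil =>
    simpa [cylinder_nil] using (prob_compl_eq_zero_iff measurableSet_Icc).1 S.measure_compl_Icc
  | cons i w ih =>
    rw [cylinder_cons,
      S.measure_image_map i (S.measurableSet_cylinder w) (S.cylinder_subset_Icc w), ih,
      ← ENNReal.ofReal_mul (S.p_pos i).le, wordWeight_cons]

lemma measureReal_cylinder (w : List (Fin m)) : S.μ.real (S.cylinder w) = S.wordWeight w := by
  rw [measureReal_def, measure_cylinder, ENNReal.toReal_ofReal (S.wordWeight_pos w).le]

lemma exists_prefix_gap_le_dist : ∀ w v : List (Fin m), ¬ w <+: v → ¬ v <+: w →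
    ∃ u, u <+: w ∧ u ≠ w ∧ u <+: v ∧
      ∀ x ∈ S.cylinder w, ∀ y ∈ S.cylinder v, S.gap * S.wordRatio u ≤ |x - y|
  | [], _, hw, _ => absurd List.nil_prefix hw
  | _ :: _, [], _, hv => absurd List.nil_prefix hv
  | i :: w, j :: v, hw, hv => by
    by_cases hij : i = j
    · subst hij
      obtain ⟨u, huw, hne, huv, hdist⟩ := exists_prefix_gap_le_dist w v
        (fun h => hw (List.cons_prefix_cons.2 ⟨rfl, h⟩))
        (fun h => hv (List.cons_prefix_cons.2 ⟨rfl, h⟩))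
      refine ⟨i :: u, List.cons_prefix_cons.2 ⟨rfl, huw⟩,
        fun h => hne (List.cons_inj_right _ |>.1 h),
        List.cons_prefix_cons.2 ⟨rfl, huv⟩, ?_⟩
      rintro _ hx _ hy
      rw [cylinder_cons] at hx hy
      obtain ⟨x, hx, rfl⟩ := hx
      obtain ⟨y, hy, rfl⟩ := hy
      rw [S.dist_map, wordRatio_cons, mul_left_comm]
      exact mul_le_mul_of_nonneg_left (hdist x hx y hy) (S.r_pos i).le
    · refine ⟨[], List.nil_prefix, List.cons_ne_nil _ _ |>.symm, List.nil_prefix, ?_⟩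
      intro x hx y hy
      have hx' := S.cylinder_cons_subset i w hx
      have hy' := S.cylinder_cons_subset j v hy
      rw [wordRatio_nil, mul_one]
      rcases lt_or_gt_of_ne hij with h | h
      · have := S.gap_le h
        rw [abs_sub_comm, abs_of_nonneg (by linarith [hx'.2, hy'.1, S.gap_pos])]
        linarith [hx'.2, hy'.1]
      · have := S.gap_le h
        rw [abs_of_nonneg (by linarith [hy'.2, hx'.1, S.gap_pos])]
        linarith [hy'.2, hx'.1]

/-! ### Stopping words -/

def IsStopping (R : ℝ) (w : List (Fin m)) : Prop :=
  S.wordRatio w ≤ R ∧ ∀ u, u <+: w → u ≠ w → R < S.wordRatio u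

variable {S}

lemma isStopping_iff_eq_nil {R : ℝ} (hR : 1 ≤ R) {w : List (Fin m)} :
    S.IsStopping R w ↔ w = [] := by
  refine ⟨fun ⟨_, h⟩ => ?_, ?_⟩
  · by_contra hw
    exact (h [] List.nil_prefix (Ne.symm hw)).not_ge (by simpa using hR)
  · rintro rfl
    exact ⟨by simpa using hR, fun u hu hne => absurd (List.prefix_nil.1 hu) hne⟩

lemma not_isStopping_nil {R : ℝ} (hR : R < 1) : ¬ S.IsStopping R [] :=
  fun h => hR.not_ge (by simpa using h.1)

lemma isStopping_cons_iff {R : ℝ} (hR : R < 1) (i : Fin m) (w : List (Fin m)) :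
    S.IsStopping R (i :: w) ↔ S.IsStopping (R / S.r i) w := by
  have hr := S.r_pos i
  simp only [IsStopping, wordRatio_cons, le_div_iff₀' hr, div_lt_iff₀' hr]
  refine and_congr_right fun _ => ⟨fun h u hu hne => ?_, fun h u hu hne => ?_⟩
  · simpa using h (i :: u) (List.cons_prefix_cons.2 ⟨rfl, hu⟩) (by simpa using hne)
  · rcases List.prefix_cons_iff.1 hu with rfl | ⟨t, rfl, ht⟩
    · simpa using hR
    · simpa using h t ht (by simpa using hne)

variable (S)

/-- A search of depth `n` for the stopping words at scale `R`. -/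
def stoppingAux : ℕ → ℝ → Finset (List (Fin m))
  | 0, R => if 1 ≤ R then {[]} else ∅
  | n + 1, R => if 1 ≤ R then {[]} else
      Finset.univ.biUnion fun i =>
        (stoppingAux n (R / S.r i)).map ⟨List.cons i, List.cons_injective⟩

lemma maxRatio_pow_le_div {n : ℕ} {R : ℝ} (hR : S.maxRatio ^ (n + 1) ≤ R) (i : Fin m) :
    S.maxRatio ^ n ≤ R / S.r i := by
  rw [le_div_iff₀ (S.r_pos i)]
  calc S.maxRatio ^ n * S.r i ≤ S.maxRatio ^ n * S.maxRatio :=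
        mul_le_mul_of_nonneg_left (S.le_maxRatio i) (pow_pos S.maxRatio_pos n).le
    _ ≤ R := by rwa [← pow_succ]

lemma mem_stoppingAux_iff : ∀ {n : ℕ} {R : ℝ}, S.maxRatio ^ n ≤ R → ∀ {w : List (Fin m)},
    w ∈ S.stoppingAux n R ↔ S.IsStopping R w
  | 0, R, hR, w => by
    rw [pow_zero] at hR
    simp [stoppingAux, hR, isStopping_iff_eq_nil hR]
  | n + 1, R, hR, w => by
    by_cases h1 : 1 ≤ R
    · simp [stoppingAux, h1, isStopping_iff_eq_nil h1]
    rw [not_le] at h1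
    rcases w with _ | ⟨i, w⟩
    · simp [stoppingAux, h1.not_ge, not_isStopping_nil h1]
    · simp [stoppingAux, h1.not_ge, isStopping_cons_iff h1,
        mem_stoppingAux_iff (S.maxRatio_pow_le_div hR i)]

lemma sum_stoppingAux_prod_map {f : Fin m → ℝ} (hf : ∑ i, f i = 1) :
    ∀ {n : ℕ} {R : ℝ}, S.maxRatio ^ n ≤ R → ∑ w ∈ S.stoppingAux n R, (w.map f).prod = 1
  | 0, R, hR => by
    rw [pow_zero] at hR
    simp [stoppingAux, hR]
  | n + 1, R, hR => by
    by_cases h1 : 1 ≤ R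
    · simp [stoppingAux, h1]
    have hdisj : ((Finset.univ : Finset (Fin m)) : Set (Fin m)).PairwiseDisjoint fun i =>
        (S.stoppingAux n (R / S.r i)).map ⟨List.cons i, List.cons_injective⟩ := by
      intro i _ j _ hij
      simp only [Function.onFun, Finset.disjoint_left, Finset.mem_map]
      rintro _ ⟨u, -, rfl⟩ ⟨v, -, huv⟩
      exact hij (List.cons_eq_cons.1 huv).1.symm
    simp only [stoppingAux, if_neg h1, Finset.sum_biUnion hdisj, Finset.sum_map]
    simp [← Finset.mul_sum, sum_stoppingAux_prod_map hf (S.maxRatio_pow_le_div hR _), hf]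

def depth (R : ℝ) : ℕ := ⌈Real.log R / Real.log S.maxRatio⌉₊

lemma maxRatio_pow_depth_le {R : ℝ} (hR : 0 < R) : S.maxRatio ^ S.depth R ≤ R := by
  have hlog : Real.log S.maxRatio < 0 := Real.log_neg S.maxRatio_pos S.maxRatio_lt_one
  rw [← Real.log_le_log_iff (pow_pos S.maxRatio_pos _) hR, Real.log_pow,
    ← div_le_iff_of_neg hlog]
  exact Nat.le_ceil _

def stopping (R : ℝ) : Finset (List (Fin m)) := S.stoppingAux (S.depth R) R

lemma mem_stopping_iff {R : ℝ} (hR : 0 < R) {w : List (Fin m)} :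
    w ∈ S.stopping R ↔ S.IsStopping R w :=
  S.mem_stoppingAux_iff (S.maxRatio_pow_depth_le hR)

lemma sum_stopping_prod_map {f : Fin m → ℝ} (hf : ∑ i, f i = 1) {R : ℝ} (hR : 0 < R) :
    ∑ w ∈ S.stopping R, (w.map f).prod = 1 :=
  S.sum_stoppingAux_prod_map hf (S.maxRatio_pow_depth_le hR)

def minRatio : ℝ := Finset.univ.inf' S.univ_nonempty S.r

lemma minRatio_le (i : Fin m) : S.minRatio ≤ S.r i := Finset.inf'_le _ (Finset.mem_univ i)

lemma minRatio_pos : 0 < S.minRatio := by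
  obtain ⟨i, -, hi⟩ := Finset.exists_mem_eq_inf' S.univ_nonempty S.r
  rw [minRatio, hi]
  exact S.r_pos i

def minWeight : ℝ := Finset.univ.inf' S.univ_nonempty S.p

lemma minWeight_le (i : Fin m) : S.minWeight ≤ S.p i := Finset.inf'_le _ (Finset.mem_univ i)

lemma minWeight_pos : 0 < S.minWeight := by
  obtain ⟨i, -, hi⟩ := Finset.exists_mem_eq_inf' S.univ_nonempty S.p
  rw [minWeight, hi]
  exact S.p_pos i

lemma minWeight_pow_length_le (w : List (Fin m)) : S.minWeight ^ w.length ≤ S.wordWeight w := by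
  induction w with
  | nil => simp
  | cons i w ih =>
    rw [wordWeight_cons, List.length_cons, pow_succ']
    exact mul_le_mul (S.minWeight_le i) ih (pow_pos S.minWeight_pos _).le (S.p_pos i).le

/-- Words of ratio at least `ε` have bounded length, hence weight bounded below. -/
lemma exists_le_wordWeight {ε : ℝ} (hε : 0 < ε) :
    ∃ δ, 0 < δ ∧ δ ≤ 1 ∧ ∀ t, ε ≤ S.wordRatio t → δ ≤ S.wordWeight t := by
  have hρ := S.maxRatio_pos
  have hρ1 := S.maxRatio_lt_one
  have hw1 : S.minWeight ≤ 1 := (S.minWeight_le S.univ_nonempty.choose).trans (S.p_le_one _)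
  obtain ⟨L, hL⟩ := exists_pow_lt_of_lt_one hε hρ1
  refine ⟨S.minWeight ^ L, pow_pos S.minWeight_pos L, pow_le_one₀ S.minWeight_pos.le hw1,
    fun t ht => ?_⟩
  have hlen : t.length ≤ L := by
    by_contra! h
    exact (ht.trans (S.wordRatio_le_pow t)).not_gt
      ((pow_le_pow_of_le_one hρ.le hρ1.le h.le).trans_lt hL)
  exact (pow_le_pow_of_le_one S.minWeight_pos.le hw1 hlen).trans (S.minWeight_pow_length_le t)

variable {S}

lemma IsStopping.minRatio_mul_lt {R : ℝ} {w : List (Fin m)} (hw : S.IsStopping R w)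
    (hR0 : 0 < R) (hR1 : R < 1) : S.minRatio * R < S.wordRatio w := by
  rcases List.eq_nil_or_concat w with rfl | ⟨u, i, rfl⟩
  · exact absurd hw (not_isStopping_nil hR1)
  have hu : R < S.wordRatio u := hw.2 u (List.prefix_concat _ _) (by simp)
  rw [List.concat_eq_append, wordRatio_append]
  simp only [wordRatio_cons, wordRatio_nil, mul_one]
  calc S.minRatio * R ≤ S.r i * R := by gcongr; exact S.minRatio_le i
    _ < S.r i * S.wordRatio u := by gcongr; exact S.r_pos i
    _ = S.wordRatio u * S.r i := mul_comm _ _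

lemma IsStopping.not_prefix {R : ℝ} {w v : List (Fin m)} (hw : S.IsStopping R w)
    (hv : S.IsStopping R v) (hne : w ≠ v) : ¬ w <+: v :=
  fun h => (hv.2 w h hne).not_ge hw.1

lemma IsStopping.gap_mul_le_dist {R : ℝ} {w v : List (Fin m)} (hw : S.IsStopping R w)
    (hv : S.IsStopping R v) (hne : w ≠ v) {x y : ℝ} (hx : x ∈ S.cylinder w)
    (hy : y ∈ S.cylinder v) : S.gap * R ≤ |x - y| := by
  obtain ⟨u, huw, hne', -, hdist⟩ :=
    S.exists_prefix_gap_le_dist w v (hw.not_prefix hv hne) (hv.not_prefix hw hne.symm)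
  exact (mul_le_mul_of_nonneg_left (hw.2 u huw hne').le S.gap_pos.le).trans (hdist x hx y hy)

variable (S)

/-- The two words branch off a common prefix `u` with `gap * wordRatio u ≤ c * R`, so the rest of
`w` has ratio bounded below, hence bounded length. -/
lemma exists_wordWeight_le_mul {c : ℝ} (hc : 0 < c) :
    ∃ C > 0, ∀ ⦃R : ℝ⦄, 0 < R → R < 1 → ∀ ⦃w v : List (Fin m)⦄,
      S.IsStopping R w → S.IsStopping R v → ∀ x ∈ S.cylinder w, ∀ y ∈ S.cylinder v,
        |x - y| ≤ c * R → S.wordWeight v ≤ C * S.wordWeight w := by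
  obtain ⟨δ, hδ0, hδ1, hδ⟩ :=
    S.exists_le_wordWeight (div_pos (mul_pos S.minRatio_pos S.gap_pos) hc)
  refine ⟨δ⁻¹, inv_pos.2 hδ0, fun R hR0 hR1 w v hw hv x hx y hy hxy => ?_⟩
  by_cases hvw : v = w
  · subst hvw
    exact le_mul_of_one_le_left (S.wordWeight_pos v).le (one_le_inv₀ hδ0 |>.2 hδ1)
  obtain ⟨u, ⟨t, rfl⟩, -, ⟨t', rfl⟩, hdist⟩ :=
    S.exists_prefix_gap_le_dist _ _ (hw.not_prefix hv (Ne.symm hvw)) (hv.not_prefix hw hvw)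
  have hgap : S.gap * S.wordRatio u ≤ c * R := (hdist x hx y hy).trans hxy
  have hlow := hw.minRatio_mul_lt hR0 hR1
  rw [wordRatio_append] at hlow
  have ht : S.minRatio * S.gap / c ≤ S.wordRatio t := by
    rw [div_le_iff₀ hc]
    refine le_of_mul_le_mul_left ?_ hR0
    nlinarith [S.gap_pos, S.wordRatio_pos t, S.minRatio_pos]
  calc S.wordWeight (u ++ t') ≤ S.wordWeight u := S.wordWeight_append_le u t'
    _ ≤ δ⁻¹ * (S.wordWeight u * S.wordWeight t) := by
      rw [le_inv_mul_iff₀ hδ0, mul_comm δ]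
      exact mul_le_mul_of_nonneg_left (hδ t ht) (S.wordWeight_pos u).le
    _ = δ⁻¹ * S.wordWeight (u ++ t) := by rw [wordWeight_append]

lemma sum_stopping_wordWeight {R : ℝ} (hR : 0 < R) : ∑ w ∈ S.stopping R, S.wordWeight w = 1 :=
  S.sum_stopping_prod_map S.sum_p hR

lemma pairwiseDisjoint_cylinder {R : ℝ} (hR : 0 < R) :
    (S.stopping R : Set (List (Fin m))).PairwiseDisjoint S.cylinder := by
  intro w hw v hv hne
  refine Set.disjoint_left.2 fun x hxw hxv => ?_
  have := ((S.mem_stopping_iff hR).1 hw).gap_mul_le_dist ((S.mem_stopping_iff hR).1 hv) hne hxw hxv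
  rw [sub_self, abs_zero] at this
  exact this.not_gt (mul_pos S.gap_pos hR)

lemma measure_compl_iUnion_cylinder {R : ℝ} (hR : 0 < R) :
    S.μ (⋃ w ∈ S.stopping R, S.cylinder w)ᶜ = 0 := by
  rw [prob_compl_eq_zero_iff (Finset.measurableSet_biUnion _ fun w _ => S.measurableSet_cylinder w),
    measure_biUnion_finset (S.pairwiseDisjoint_cylinder hR) fun w _ => S.measurableSet_cylinder w]
  simp_rw [measure_cylinder]
  rw [← ENNReal.ofReal_sum_of_nonneg fun w _ => (S.wordWeight_pos w).le,
    S.sum_stopping_wordWeight hR, ENNReal.ofReal_one]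

lemma measureReal_le_sum_stopping {R : ℝ} (hR : 0 < R) (A : Set ℝ) :
    S.μ.real A ≤ ∑ w ∈ S.stopping R with (S.cylinder w ∩ A).Nonempty, S.wordWeight w := by
  calc S.μ.real A = S.μ.real (A ∩ ⋃ w ∈ S.stopping R, S.cylinder w) := by
        rw [measureReal_def, measureReal_def,
          measure_inter_conull (S.measure_compl_iUnion_cylinder hR)]
    _ ≤ S.μ.real (⋃ w ∈ (S.stopping R).filter fun w => (S.cylinder w ∩ A).Nonempty,
          S.cylinder w) := by
        refine measureReal_mono (fun x ⟨hxA, hx⟩ => ?_) (measure_ne_top _ _)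
        obtain ⟨w, hw, hxw⟩ := mem_iUnion₂.1 hx
        exact mem_iUnion₂.2 ⟨w, Finset.mem_filter.2 ⟨hw, x, hxw, hxA⟩, hxw⟩
    _ ≤ _ := measureReal_biUnion_finset_le _ _
    _ = _ := by simp_rw [measureReal_cylinder]

lemma exists_stopping_measure_inter_pos {R : ℝ} (hR : 0 < R) {A : Set ℝ} (hA : 0 < S.μ A) :
    ∃ w ∈ S.stopping R, 0 < S.μ (A ∩ S.cylinder w) := by
  by_contra! h
  have hnull : S.μ (⋃ w ∈ S.stopping R, A ∩ S.cylinder w) = 0 :=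
    (measure_biUnion_null_iff (S.stopping R).countable_toSet).2 fun w hw =>
      le_antisymm (h w hw) bot_le
  rw [← inter_iUnion₂, measure_inter_conull (S.measure_compl_iUnion_cylinder hR)] at hnull
  exact hA.ne' hnull

lemma sum_stopping_weight_rpow_mul_ratio_rpow {q β : ℝ}
    (hβ : ∑ i, S.p i ^ q * S.r i ^ β = 1) {R : ℝ} (hR : 0 < R) :
    ∑ w ∈ S.stopping R, S.wordWeight w ^ q * S.wordRatio w ^ β = 1 := by
  simpa only [S.prod_map_rpow_mul_rpow] using S.sum_stopping_prod_map hβ hR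

lemma weight_rpow_mul_nonneg {q β : ℝ} (w : List (Fin m)) :
    0 ≤ S.wordWeight w ^ q * S.wordRatio w ^ β :=
  mul_nonneg (Real.rpow_nonneg (S.wordWeight_pos w).le _)
    (Real.rpow_nonneg (S.wordRatio_pos w).le _)

lemma wordWeight_rpow_eq (q β : ℝ) (w : List (Fin m)) :
    S.wordWeight w ^ q = S.wordWeight w ^ q * S.wordRatio w ^ β * S.wordRatio w ^ (-β) := by
  rw [mul_assoc, ← Real.rpow_add (S.wordRatio_pos w), add_neg_cancel, Real.rpow_zero, mul_one]

lemma sum_stopping_weight_rpow_le {q β : ℝ} (hβ : ∑ i, S.p i ^ q * S.r i ^ β = 1) {R : ℝ}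
    (hR0 : 0 < R) (hR1 : R < 1) :
    ∑ w ∈ S.stopping R, S.wordWeight w ^ q ≤ max 1 (S.minRatio ^ (-β)) * R ^ (-β) := by
  calc ∑ w ∈ S.stopping R, S.wordWeight w ^ q
      = ∑ w ∈ S.stopping R, S.wordWeight w ^ q * S.wordRatio w ^ β * S.wordRatio w ^ (-β) :=
        Finset.sum_congr rfl fun w _ => S.wordWeight_rpow_eq q β w
    _ ≤ ∑ w ∈ S.stopping R,
          S.wordWeight w ^ q * S.wordRatio w ^ β * (max 1 (S.minRatio ^ (-β)) * R ^ (-β)) := by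
        refine Finset.sum_le_sum fun w hw =>
          mul_le_mul_of_nonneg_left ?_ (S.weight_rpow_mul_nonneg w)
        have hw := (S.mem_stopping_iff hR0).1 hw
        exact rpow_le_max_one_mul_rpow _ S.minRatio_pos hR0 (hw.minRatio_mul_lt hR0 hR1).le hw.1
    _ = max 1 (S.minRatio ^ (-β)) * R ^ (-β) := by
        rw [← Finset.sum_mul, S.sum_stopping_weight_rpow_mul_ratio_rpow hβ hR0, one_mul]

lemma le_sum_stopping_weight_rpow {q β : ℝ} (hβ : ∑ i, S.p i ^ q * S.r i ^ β = 1) {R : ℝ}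
    (hR0 : 0 < R) (hR1 : R < 1) :
    min 1 (S.minRatio ^ (-β)) * R ^ (-β) ≤ ∑ w ∈ S.stopping R, S.wordWeight w ^ q := by
  calc min 1 (S.minRatio ^ (-β)) * R ^ (-β)
      = ∑ w ∈ S.stopping R,
          S.wordWeight w ^ q * S.wordRatio w ^ β * (min 1 (S.minRatio ^ (-β)) * R ^ (-β)) := by
        rw [← Finset.sum_mul, S.sum_stopping_weight_rpow_mul_ratio_rpow hβ hR0, one_mul]
    _ ≤ ∑ w ∈ S.stopping R, S.wordWeight w ^ q * S.wordRatio w ^ β * S.wordRatio w ^ (-β) := by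
        refine Finset.sum_le_sum fun w hw =>
          mul_le_mul_of_nonneg_left ?_ (S.weight_rpow_mul_nonneg w)
        have hw := (S.mem_stopping_iff hR0).1 hw
        exact min_one_mul_rpow_le_rpow _ S.minRatio_pos hR0 (hw.minRatio_mul_lt hR0 hR1).le hw.1
    _ = ∑ w ∈ S.stopping R, S.wordWeight w ^ q :=
        Finset.sum_congr rfl fun w _ => (S.wordWeight_rpow_eq q β w).symm

lemma card_stopping_meet_Icc_le {R u v : ℝ} (hR : 0 < R) (huv : u ≤ v) :
    (((S.stopping R).filter fun w => (S.cylinder w ∩ Icc u v).Nonempty).card : ℝ)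
      ≤ (v - u + R) / (S.gap * R) + 2 := by
  have hgR : 0 < S.gap * R := mul_pos S.gap_pos hR
  refine (Finset.card_le_of_injOn_int (φ := fun w => ⌊S.offset w / (S.gap * R)⌋)
    (A := (u - R) / (S.gap * R) - 1) (B := v / (S.gap * R)) ?_ ?_ ?_).trans_eq ?_
  · intro w hw w' hw' heq
    by_contra hne
    have hw := (S.mem_stopping_iff hR).1 (Finset.mem_filter.1 hw).1
    have hw' := (S.mem_stopping_iff hR).1 (Finset.mem_filter.1 hw').1
    exact Int.floor_div_ne_floor_div hgR (hw.gap_mul_le_dist hw' hne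
      (S.offset_mem_cylinder w) (S.offset_mem_cylinder w')) heq
  · have : (u - R) / (S.gap * R) ≤ v / (S.gap * R) := by gcongr; linarith
    linarith
  · intro w hw
    obtain ⟨hw, z, ⟨hz1, hz2⟩, hz3, hz4⟩ := Finset.mem_filter.1 hw
    have hratio := ((S.mem_stopping_iff hR).1 hw).1
    constructor
    · have : (u - R) / (S.gap * R) ≤ S.offset w / (S.gap * R) := by gcongr; linarith
      linarith [Int.sub_one_lt_floor (S.offset w / (S.gap * R))]
    · exact (Int.floor_le _).trans (by gcongr; linarith)
  · field_simp
    ring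

lemma card_stopping_meet_enlargedCell_le {a R : ℝ} (ha : 0 ≤ a) (hR : 0 < R) (k : ℤ) :
    (((S.stopping R).filter fun w => (S.cylinder w ∩ enlargedCell a R k).Nonempty).card : ℝ)
      ≤ (2 + a) / S.gap + 2 := by
  rw [enlargedCell_eq_Icc]
  refine (S.card_stopping_meet_Icc_le hR (by nlinarith)).trans_eq ?_
  rw [show (k + 1) * R + a * R / 2 - (k * R - a * R / 2) + R = (2 + a) * R by ring,
    mul_div_mul_right _ _ hR.ne']

/-! ### Comparing the grid sum with the stopping sums -/

lemma gridSum_eq {a q R : ℝ} (hR : 0 < R) :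
    gridSum S.μ a q R = ∑ k ∈ gridIndices R, cellTerm S.μ a q R k :=
  gridSum_eq_sum_cellTerm hR S.measure_compl_Icc

lemma card_enlargedCell_meet_cylinder_le {a R : ℝ} (ha : 0 ≤ a) (hR : 0 < R)
    {w : List (Fin m)} (hw : S.wordRatio w ≤ R) (K : Finset ℤ) :
    ((K.filter fun k => (S.cylinder w ∩ enlargedCell a R k).Nonempty).card : ℝ) ≤ a + 3 :=
  card_enlargedCell_meet_Icc_le ha hR (le_add_of_nonneg_right (S.wordRatio_pos w).le)
    (by rwa [add_sub_cancel_left]) K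

lemma card_stopping_measure_inter_gridCell_pos_le {R : ℝ} (hR : 0 < R) (k : ℤ) :
    (((S.stopping R).filter fun w => 0 < S.μ (S.cylinder w ∩ gridCell R k)).card : ℝ)
      ≤ 2 / S.gap + 2 := by
  refine le_trans ?_
    ((S.card_stopping_meet_enlargedCell_le le_rfl hR k).trans_eq (by rw [add_zero]))
  exact_mod_cast Finset.card_le_card (Finset.monotone_filter_right _ fun w _ hw => by
    rw [enlargedCell_zero]; exact nonempty_of_measure_ne_zero hw.ne')

lemma sum_cellTerm_le_of_forall {a a' q β R R' D : ℝ} (hβ : ∑ i, S.p i ^ q * S.r i ^ β = 1)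
    (ha' : 0 ≤ a') (hR : 0 < R) (hR'0 : 0 < R') (hR'1 : R' < 1) (hR' : R' ≤ R) (hD : 0 ≤ D)
    (h : ∀ k ∈ gridIndices R, cellTerm S.μ a q R k ≤ D * ∑ w ∈ S.stopping R' with
      (S.cylinder w ∩ enlargedCell a' R k).Nonempty, S.wordWeight w ^ q) :
    ∑ k ∈ gridIndices R, cellTerm S.μ a q R k
      ≤ D * (a' + 3) * (max 1 (S.minRatio ^ (-β)) * R' ^ (-β)) := by
  calc ∑ k ∈ gridIndices R, cellTerm S.μ a q R k
      ≤ D * ∑ k ∈ gridIndices R, ∑ w ∈ S.stopping R' with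
          (S.cylinder w ∩ enlargedCell a' R k).Nonempty, S.wordWeight w ^ q := by
        rw [Finset.mul_sum]
        exact Finset.sum_le_sum h
    _ ≤ D * ((a' + 3) * ∑ w ∈ S.stopping R', S.wordWeight w ^ q) := by
        refine mul_le_mul_of_nonneg_left (Finset.sum_sum_filter_le_mul_sum _ _
          (fun k w => (S.cylinder w ∩ enlargedCell a' R k).Nonempty)
          (fun w _ => Real.rpow_nonneg (S.wordWeight_pos w).le q) fun w hw => ?_) hD
        exact S.card_enlargedCell_meet_cylinder_le ha' hR
          (((S.mem_stopping_iff hR'0).1 hw).1.trans hR') _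
    _ ≤ D * ((a' + 3) * (max 1 (S.minRatio ^ (-β)) * R' ^ (-β))) := by
        gcongr
        exact S.sum_stopping_weight_rpow_le hβ hR'0 hR'1
    _ = D * (a' + 3) * (max 1 (S.minRatio ^ (-β)) * R' ^ (-β)) := by ring

lemma cellTerm_le_of_nonneg {a q R : ℝ} (ha : 0 ≤ a) (hq : 0 ≤ q) (hR : 0 < R) (k : ℤ) :
    cellTerm S.μ a q R k ≤ ((2 + a) / S.gap + 2) ^ q * ∑ w ∈ S.stopping R with
      (S.cylinder w ∩ enlargedCell a R k).Nonempty, S.wordWeight w ^ q := by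
  have hN : 0 ≤ (2 + a) / S.gap + 2 := by have := S.gap_pos; positivity
  unfold cellTerm
  split_ifs with hk
  · obtain ⟨w, hw, hw'⟩ := S.exists_stopping_measure_inter_pos hR
      (hk.trans_le (measure_mono (gridCell_subset_enlargedCell ha hR.le k)))
    have hne : ((S.stopping R).filter
        fun w => (S.cylinder w ∩ enlargedCell a R k).Nonempty).Nonempty :=
      ⟨w, Finset.mem_filter.2 ⟨hw, by rw [inter_comm]; exact nonempty_of_measure_ne_zero hw'.ne'⟩⟩
    calc S.μ.real (enlargedCell a R k) ^ q
        ≤ (∑ w ∈ S.stopping R with (S.cylinder w ∩ enlargedCell a R k).Nonempty,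
            S.wordWeight w) ^ q :=
          Real.rpow_le_rpow measureReal_nonneg (S.measureReal_le_sum_stopping hR _) hq
      _ ≤ _ := Finset.rpow_sum_le_rpow_mul_sum_rpow hne (fun w _ => (S.wordWeight_pos w).le) hq
          (S.card_stopping_meet_enlargedCell_le ha hR k)
  · exact mul_nonneg (Real.rpow_nonneg hN q)
      (Finset.sum_nonneg fun w _ => Real.rpow_nonneg (S.wordWeight_pos w).le q)

lemma cylinder_subset_enlargedCell {a R : ℝ} {w : List (Fin m)} {k : ℤ}
    (hw : S.wordRatio w ≤ a * R / 2) (hk : (S.cylinder w ∩ gridCell R k).Nonempty) :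
    S.cylinder w ⊆ enlargedCell a R k := by
  obtain ⟨z, ⟨hz1, hz2⟩, hz3, hz4⟩ := hk
  rw [enlargedCell_eq_Icc]
  rintro x ⟨hx1, hx2⟩
  constructor <;> linarith

/-- For `q < 0` the cell term is controlled by a single stopping word at the finer scale
`min (a / 2) 1 * R`, whose cylinder lies inside the enlarged cell. -/
lemma cellTerm_le_of_neg {a q R : ℝ} (ha : 0 < a) (hq : q < 0) (hR : 0 < R) (k : ℤ) :
    cellTerm S.μ a q R k ≤ ∑ w ∈ S.stopping (min (a / 2) 1 * R) with
      (S.cylinder w ∩ enlargedCell 0 R k).Nonempty, S.wordWeight w ^ q := by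
  have hcR : 0 < min (a / 2) 1 * R := mul_pos (lt_min (half_pos ha) one_pos) hR
  unfold cellTerm
  split_ifs with hk
  · obtain ⟨w, hw, hw'⟩ := S.exists_stopping_measure_inter_pos hcR hk
    have hmeet : (S.cylinder w ∩ gridCell R k).Nonempty := by
      rw [inter_comm]; exact nonempty_of_measure_ne_zero hw'.ne'
    have hratio : S.wordRatio w ≤ a * R / 2 :=
      ((S.mem_stopping_iff hcR).1 hw).1.trans (by nlinarith [min_le_left (a / 2) 1])
    have hle : S.wordWeight w ≤ S.μ.real (enlargedCell a R k) := by
      rw [← S.measureReal_cylinder]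
      exact measureReal_mono (S.cylinder_subset_enlargedCell hratio hmeet) (measure_ne_top _ _)
    refine (Real.rpow_le_rpow_of_nonpos (S.wordWeight_pos w) hle hq.le).trans ?_
    refine Finset.single_le_sum (f := fun w => S.wordWeight w ^ q)
      (fun w _ => Real.rpow_nonneg (S.wordWeight_pos w).le q) (Finset.mem_filter.2 ⟨hw, ?_⟩)
    rwa [enlargedCell_zero]
  · exact Finset.sum_nonneg fun w _ => Real.rpow_nonneg (S.wordWeight_pos w).le q

lemma exists_gridSum_le {a q β : ℝ} (hβ : ∑ i, S.p i ^ q * S.r i ^ β = 1) (ha : 0 < a) :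
    ∃ C, ∀ R, 0 < R → R < 1 → gridSum S.μ a q R ≤ C * R ^ (-β) := by
  rcases le_or_gt 0 q with hq | hq
  · refine ⟨((2 + a) / S.gap + 2) ^ q * (a + 3) * max 1 (S.minRatio ^ (-β)),
      fun R hR0 hR1 => ?_⟩
    rw [S.gridSum_eq hR0, mul_assoc _ (max _ _)]
    exact S.sum_cellTerm_le_of_forall hβ ha.le hR0 hR0 hR1 le_rfl
      (Real.rpow_nonneg (by have := S.gap_pos; positivity) q)
      fun k _ => S.cellTerm_le_of_nonneg ha.le hq hR0 k
  · set c := min (a / 2) 1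
    have hc : 0 < c := lt_min (half_pos ha) one_pos
    refine ⟨1 * (0 + 3) * max 1 (S.minRatio ^ (-β)) * c ^ (-β), fun R hR0 hR1 => ?_⟩
    have hcR : c * R ≤ R := mul_le_of_le_one_left hR0.le (min_le_right _ _)
    rw [S.gridSum_eq hR0, mul_assoc _ (c ^ (-β)), ← Real.mul_rpow hc.le hR0.le,
      mul_assoc _ (max _ _)]
    exact S.sum_cellTerm_le_of_forall hβ le_rfl hR0 (mul_pos hc hR0) (hcR.trans_lt hR1) hcR
      zero_le_one fun k _ => (S.cellTerm_le_of_neg ha hq hR0 k).trans_eq (one_mul _).symm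

lemma wordWeight_le_sum_measureReal {R : ℝ} (hR : 0 < R) (w : List (Fin m)) :
    S.wordWeight w ≤ ∑ k ∈ gridIndices R with 0 < S.μ (S.cylinder w ∩ gridCell R k),
      S.μ.real (S.cylinder w ∩ gridCell R k) := by
  rw [Finset.sum_filter_of_ne fun k _ hk =>
    pos_iff_ne_zero.2 fun h => hk (by rw [measureReal_def, h, ENNReal.toReal_zero])]
  calc S.wordWeight w = S.μ.real (S.cylinder w) := (S.measureReal_cylinder w).symm
    _ ≤ S.μ.real (⋃ k ∈ gridIndices R, S.cylinder w ∩ gridCell R k) := by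
        refine measureReal_mono (fun x hx => ?_) (measure_ne_top _ _)
        obtain ⟨k, hk, hxk⟩ :=
          mem_iUnion₂.1 (Icc_subset_iUnion_gridCell hR (S.cylinder_subset_Icc w hx))
        exact mem_iUnion₂.2 ⟨k, hk, hx, hxk⟩
    _ ≤ _ := measureReal_biUnion_finset_le _ _

lemma cellTerm_eq_of_measure_inter_pos {a q R : ℝ} {w : List (Fin m)} {k : ℤ}
    (hk : 0 < S.μ (S.cylinder w ∩ gridCell R k)) :
    cellTerm S.μ a q R k = S.μ.real (enlargedCell a R k) ^ q :=
  if_pos (hk.trans_le (measure_mono inter_subset_right))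

lemma le_sum_cellTerm_of_forall {a q β R D : ℝ} (hβ : ∑ i, S.p i ^ q * S.r i ^ β = 1)
    (hR0 : 0 < R) (hR1 : R < 1) (hD : 0 ≤ D)
    (h : ∀ w ∈ S.stopping R, S.wordWeight w ^ q ≤ D * ∑ k ∈ gridIndices R with
      0 < S.μ (S.cylinder w ∩ gridCell R k), cellTerm S.μ a q R k) :
    min 1 (S.minRatio ^ (-β)) * R ^ (-β)
      ≤ D * (2 / S.gap + 2) * ∑ k ∈ gridIndices R, cellTerm S.μ a q R k := by
  calc min 1 (S.minRatio ^ (-β)) * R ^ (-β) ≤ ∑ w ∈ S.stopping R, S.wordWeight w ^ q :=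
        S.le_sum_stopping_weight_rpow hβ hR0 hR1
    _ ≤ D * ∑ w ∈ S.stopping R, ∑ k ∈ gridIndices R with
          0 < S.μ (S.cylinder w ∩ gridCell R k), cellTerm S.μ a q R k := by
        rw [Finset.mul_sum]
        exact Finset.sum_le_sum h
    _ ≤ D * ((2 / S.gap + 2) * ∑ k ∈ gridIndices R, cellTerm S.μ a q R k) := by
        refine mul_le_mul_of_nonneg_left ?_ hD
        exact Finset.sum_sum_filter_le_mul_sum (x := cellTerm S.μ a q R) _ _
          (fun w k => 0 < S.μ (S.cylinder w ∩ gridCell R k))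
          (fun k _ => cellTerm_nonneg _ _ _ _ k)
          fun k _ => S.card_stopping_measure_inter_gridCell_pos_le hR0 k
    _ = D * (2 / S.gap + 2) * ∑ k ∈ gridIndices R, cellTerm S.μ a q R k := by ring

/-- For `q ≥ 0`, the mass of a stopping cylinder is spread over at most three cells. -/
lemma wordWeight_rpow_le_of_nonneg {a q R : ℝ} (ha : 0 ≤ a) (hq : 0 ≤ q) (hR : 0 < R)
    {w : List (Fin m)} (hw : w ∈ S.stopping R) :
    S.wordWeight w ^ q ≤ 3 ^ q * ∑ k ∈ gridIndices R with
      0 < S.μ (S.cylinder w ∩ gridCell R k), cellTerm S.μ a q R k := by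
  set Q := (gridIndices R).filter fun k => 0 < S.μ (S.cylinder w ∩ gridCell R k)
  have hsum := S.wordWeight_le_sum_measureReal hR w
  have hQ : Q.Nonempty := Finset.nonempty_of_sum_ne_zero (hsum.trans_lt' (S.wordWeight_pos w)).ne'
  have hcard : (Q.card : ℝ) ≤ 3 := by
    refine le_trans ?_ ((S.card_enlargedCell_meet_cylinder_le le_rfl hR
      ((S.mem_stopping_iff hR).1 hw).1 (gridIndices R)).trans_eq (zero_add 3))
    exact_mod_cast Finset.card_le_card (Finset.monotone_filter_right _ fun k _ hk => by
      rw [enlargedCell_zero]; exact nonempty_of_measure_ne_zero hk.ne')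
  calc S.wordWeight w ^ q ≤ (∑ k ∈ Q, S.μ.real (S.cylinder w ∩ gridCell R k)) ^ q :=
        Real.rpow_le_rpow (S.wordWeight_pos w).le hsum hq
    _ ≤ (∑ k ∈ Q, S.μ.real (enlargedCell a R k)) ^ q := by
        refine Real.rpow_le_rpow (Finset.sum_nonneg fun _ _ => measureReal_nonneg)
          (Finset.sum_le_sum fun k _ => measureReal_mono ?_ (measure_ne_top _ _)) hq
        exact inter_subset_right.trans (gridCell_subset_enlargedCell ha hR.le k)
    _ ≤ 3 ^ q * ∑ k ∈ Q, S.μ.real (enlargedCell a R k) ^ q :=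
        Finset.rpow_sum_le_rpow_mul_sum_rpow hQ (fun _ _ => measureReal_nonneg) hq hcard
    _ = 3 ^ q * ∑ k ∈ Q, cellTerm S.μ a q R k := by
        congr 1
        exact Finset.sum_congr rfl fun k hk =>
          (S.cellTerm_eq_of_measure_inter_pos (Finset.mem_filter.1 hk).2).symm

/-- The stopping cylinders meeting an enlarged cell are few and have comparable weights. -/
lemma exists_measureReal_enlargedCell_le_mul {a : ℝ} (ha : 0 ≤ a) :
    ∃ M > 0, ∀ ⦃R : ℝ⦄, 0 < R → R < 1 → ∀ w ∈ S.stopping R, ∀ k : ℤ,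
      (S.cylinder w ∩ enlargedCell a R k).Nonempty →
        S.μ.real (enlargedCell a R k) ≤ M * S.wordWeight w := by
  obtain ⟨C, hC, hcomp⟩ := S.exists_wordWeight_le_mul (c := 1 + a) (by linarith)
  refine ⟨((2 + a) / S.gap + 2) * C, by have := S.gap_pos; positivity,
    fun R hR0 hR1 w hw k ⟨x, hxw, hxk⟩ => ?_⟩
  calc S.μ.real (enlargedCell a R k)
      ≤ ∑ v ∈ S.stopping R with (S.cylinder v ∩ enlargedCell a R k).Nonempty,
          S.wordWeight v := S.measureReal_le_sum_stopping hR0 _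
    _ ≤ ∑ v ∈ S.stopping R with (S.cylinder v ∩ enlargedCell a R k).Nonempty,
          C * S.wordWeight w := by
        refine Finset.sum_le_sum fun v hv => ?_
        obtain ⟨hv, y, hyv, hyk⟩ := Finset.mem_filter.1 hv
        refine hcomp hR0 hR1 ((S.mem_stopping_iff hR0).1 hw) ((S.mem_stopping_iff hR0).1 hv)
          x hxw y hyv ?_
        rw [enlargedCell_eq_Icc, mem_Icc] at hxk hyk
        rw [abs_sub_le_iff]
        constructor <;> linarith
    _ ≤ ((2 + a) / S.gap + 2) * (C * S.wordWeight w) := by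
        rw [Finset.sum_const, nsmul_eq_mul]
        exact mul_le_mul_of_nonneg_right (S.card_stopping_meet_enlargedCell_le ha hR0 k)
          (mul_pos hC (S.wordWeight_pos w)).le
    _ = ((2 + a) / S.gap + 2) * C * S.wordWeight w := by ring

lemma exists_wordWeight_rpow_le_of_neg {a q : ℝ} (ha : 0 ≤ a) (hq : q < 0) :
    ∃ D > 0, ∀ ⦃R : ℝ⦄, 0 < R → R < 1 → ∀ w ∈ S.stopping R,
      S.wordWeight w ^ q ≤ D * ∑ k ∈ gridIndices R with
        0 < S.μ (S.cylinder w ∩ gridCell R k), cellTerm S.μ a q R k := by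
  obtain ⟨M, hM, hmass⟩ := S.exists_measureReal_enlargedCell_le_mul ha
  have hMq : 0 < (M ^ q)⁻¹ := inv_pos.2 (Real.rpow_pos_of_pos hM q)
  refine ⟨(M ^ q)⁻¹, hMq, fun R hR0 hR1 w hw => ?_⟩
  obtain ⟨k, hk⟩ := Finset.nonempty_of_sum_ne_zero
    ((S.wordWeight_le_sum_measureReal hR0 w).trans_lt' (S.wordWeight_pos w)).ne'
  have hkpos := (Finset.mem_filter.1 hk).2
  have hsub := gridCell_subset_enlargedCell ha hR0.le k
  obtain ⟨x, hxw, hxk⟩ := nonempty_of_measure_ne_zero hkpos.ne'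
  have hle := hmass hR0 hR1 w hw k ⟨x, hxw, hsub hxk⟩
  have hpos : 0 < S.μ.real (enlargedCell a R k) := ENNReal.toReal_pos
    (hkpos.trans_le (measure_mono (inter_subset_right.trans hsub))).ne' (measure_ne_top _ _)
  calc S.wordWeight w ^ q = (M ^ q)⁻¹ * (M * S.wordWeight w) ^ q := by
        rw [Real.mul_rpow hM.le (S.wordWeight_pos w).le,
          inv_mul_cancel_left₀ (Real.rpow_pos_of_pos hM q).ne']
    _ ≤ (M ^ q)⁻¹ * cellTerm S.μ a q R k := by
        rw [S.cellTerm_eq_of_measure_inter_pos hkpos]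
        exact mul_le_mul_of_nonneg_left (Real.rpow_le_rpow_of_nonpos hpos hle hq.le) hMq.le
    _ ≤ _ := mul_le_mul_of_nonneg_left
        (Finset.single_le_sum (fun k _ => cellTerm_nonneg _ _ _ _ k) hk) hMq.le

lemma exists_le_gridSum {a q β : ℝ} (hβ : ∑ i, S.p i ^ q * S.r i ^ β = 1) (ha : 0 < a) :
    ∃ c > 0, ∀ R, 0 < R → R < 1 → c * R ^ (-β) ≤ gridSum S.μ a q R := by
  obtain ⟨D, hD, hw⟩ : ∃ D > 0, ∀ ⦃R : ℝ⦄, 0 < R → R < 1 → ∀ w ∈ S.stopping R,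
      S.wordWeight w ^ q ≤ D * ∑ k ∈ gridIndices R with
        0 < S.μ (S.cylinder w ∩ gridCell R k), cellTerm S.μ a q R k := by
    rcases le_or_gt 0 q with hq | hq
    · exact ⟨3 ^ q, by positivity, fun R hR0 _ w hw =>
        S.wordWeight_rpow_le_of_nonneg ha.le hq hR0 hw⟩
    · exact S.exists_wordWeight_rpow_le_of_neg ha.le hq
  have hK : 0 < D * (2 / S.gap + 2) := by have := S.gap_pos; positivity
  refine ⟨min 1 (S.minRatio ^ (-β)) / (D * (2 / S.gap + 2)),
    div_pos (lt_min one_pos (Real.rpow_pos_of_pos S.minRatio_pos _)) hK, fun R hR0 hR1 => ?_⟩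
  rw [S.gridSum_eq hR0, div_mul_eq_mul_div, div_le_iff₀ hK, mul_comm _ (D * _)]
  exact S.le_sum_cellTerm_of_forall hβ hR0 hR1 hD.le (hw hR0 hR1)

theorem betaA_eq {a q β : ℝ} (hβ : ∑ i, S.p i ^ q * S.r i ^ β = 1) (ha : 0 < a) :
    betaA S.μ a q = β := by
  obtain ⟨c, hc, hlower⟩ := S.exists_le_gridSum hβ ha
  obtain ⟨C, hupper⟩ := S.exists_gridSum_le hβ ha
  exact betaA_eq_of_bounds hc hlower hupper

end OrderedIFS

theorem stmt_17_general (m : ℕ) (ψ : ℕ → ℝ → ℝ) (ratio : ℕ → ℝ)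
    (hratio : ∀ i, i < m → 0 < ratio i ∧ ratio i < 1)
    (hsim : ∀ i, i < m → ∀ x y : ℝ, |ψ i x - ψ i y| = ratio i * |x - y|)
    (hsub : ∀ i, i < m → ψ i '' Set.Icc 0 1 ⊆ Set.Icc 0 1)
    (hord : ∀ i, i < m → ψ i 0 < ψ i 1)
    (hgap : ∀ i, i + 1 < m → ψ i 1 < ψ (i + 1) 0)
    (p : ℕ → ℝ) (hp : ∀ i, i < m → 0 < p i)
    (hpsum : ∑ i ∈ Finset.range m, p i = 1)
    (μ : Measure ℝ) [IsProbabilityMeasure μ]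
    (hμ : ∀ A : Set ℝ, MeasurableSet A →
      μ A = ∑ i ∈ Finset.range m, ENNReal.ofReal (p i) * μ (ψ i ⁻¹' A))
    (q a β : ℝ) (ha : 0 < a)
    (hβ : ∑ i ∈ Finset.range m, p i ^ q * ratio i ^ β = 1) :
    betaA μ a q = β := by
  have haff : ∀ i, i < m → ∀ x, ψ i x = ψ i 0 + ratio i * x := fun i hi =>
    eq_add_mul_of_abs_sub_eq (hsim i hi) (hord i hi)
  have hψ1 : ∀ i, i < m → ψ i 1 = ψ i 0 + ratio i := fun i hi => by
    rw [haff i hi, mul_one]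
  let S : OrderedIFS m :=
    { b := fun i => ψ i 0
      r := fun i => ratio i
      p := fun i => p i
      r_pos := fun i => (hratio i i.2).1
      r_lt_one := fun i => (hratio i i.2).2
      p_pos := fun i => hp i i.2
      sum_p := (Fin.sum_univ_eq_sum_range p m).trans hpsum
      b_nonneg := fun i => (hsub i i.2 ⟨0, left_mem_Icc.2 zero_le_one, rfl⟩).1
      b_add_r_le_one := fun i => hψ1 i i.2 ▸ (hsub i i.2 ⟨1, right_mem_Icc.2 zero_le_one, rfl⟩).2
      b_add_r_lt := fun i j hij => hψ1 i i.2 ▸ interlaced_lt hord hgap hij j.2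
      μ := μ
      isProbabilityMeasure := inferInstance
      measure_eq_sum := fun A hA => by
        rw [hμ A hA, ← Fin.sum_univ_eq_sum_range (fun i => ENNReal.ofReal (p i) * μ (ψ i ⁻¹' A))]
        exact Finset.sum_congr rfl fun i _ => by rw [preimage_congr (haff i i.2)] }
  exact S.betaA_eq ((Fin.sum_univ_eq_sum_range (fun i => p i ^ q * ratio i ^ β) m).trans hβ) ha

/-- for a self-similar measure `μ` with weights `p_i` on the attractor of an
IFS of similarities with ratios `r_i`, the moment function `β_a(q)` is, for every
enlargement parameter `a > 0`, the unique real `β` with `Σ p_i^q r_i^β = 1`. -/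
theorem stmt_17 (m : ℕ) (hm : 2 ≤ m) (ψ : ℕ → ℝ → ℝ) (ratio : ℕ → ℝ)
    (hratio : ∀ i, i < m → 0 < ratio i ∧ ratio i < 1)
    (hsim : ∀ i, i < m → ∀ x y : ℝ, |ψ i x - ψ i y| = ratio i * |x - y|)
    (hsub : ∀ i, i < m → ψ i '' Set.Icc 0 1 ⊆ Set.Icc 0 1)
    (hord : ∀ i, i < m → ψ i 0 < ψ i 1)
    (hgap : ∀ i, i + 1 < m → ψ i 1 < ψ (i + 1) 0)
    (h0 : ψ 0 0 = 0) (h1 : ψ (m - 1) 1 = 1)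
    (p : ℕ → ℝ) (hp : ∀ i, i < m → 0 < p i)
    (hpsum : ∑ i ∈ Finset.range m, p i = 1)
    (μ : Measure ℝ) [IsProbabilityMeasure μ]
    (hμ : ∀ A : Set ℝ, MeasurableSet A →
      μ A = ∑ i ∈ Finset.range m, ENNReal.ofReal (p i) * μ (ψ i ⁻¹' A))
    (q a β : ℝ) (ha : 0 < a)
    (hβ : ∑ i ∈ Finset.range m, p i ^ q * ratio i ^ β = 1) :
    betaA μ a q = β :=
  stmt_17_general m ψ ratio hratio hsim hsub hord hgap p hp hpsum μ hμ q a β ha hβ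
end
end
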